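/- arXiv:2004.07495 — 7 statements merged into one kernel-verified Lean document; each statement's English description precedes it below -/
import Mathlib

section
/- Let α : ℝ → ℝ be a polynomial function of degree at most 2, let v > 0 and p0 ∈ ℂ, and define the curve p : [0,1] → ℂ by p(t) = p0 + v·∫₀ᵗ exp(i·α(s)) ds. If p is not injective on [0,1], then α is affine (a polynomial of degree at most 1) and |α(1) − α(0)| ≥ 2π. -/
/-!
A non-injective curve has `∫ s in s₀..t₀, exp (I * α s) = 0` for some `s₀ < t₀` in `[0, 1]`.
If `α` is genuinely quadratic, completing the square turns this integral into a nonzero multiple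
of a Fresnel integral `∫ x in a..b, exp (I * x ^ 2)`, which never vanishes: for `0 ≤ a`, the
imaginary part of `exp (-I * a ^ 2)` times it is `∫ x in a..b, sin (x ^ 2 - a ^ 2)`, where the
first arch up to `c = √(a ^ 2 + π)` contributes more than `c⁻¹`, while an integration by parts
bounds the remainder below by `-c⁻¹`; for `a < 0` use that `x ^ 2` is even. If `α = B x + C`
is affine, the vanishing integral forces `exp (I * B * (t₀ - s₀)) = 1` with `B ≠ 0`, so
`|B| ≥ |B| (t₀ - s₀) ≥ 2π`.
-/

open scoped Real
open Set intervalIntegral MeasureTheory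

section RealEstimates

open Real

lemma neg_inv_le_integral_sin_sq_add (θ : ℝ) {c b : ℝ} (hc : 0 < c) (hcb : c ≤ b) :
    -c⁻¹ ≤ ∫ x in c..b, sin (x ^ 2 + θ) := by
  let K : ℝ → ℝ := fun x ↦ (1 - cos (x ^ 2 + θ)) / (2 * x)
  have hK : ∀ x ∈ Ioo c b, HasDerivWithinAt K
      (sin (x ^ 2 + θ) - (1 - cos (x ^ 2 + θ)) / (2 * x ^ 2)) (Ioi x) x := by
    intro x hx
    have hx0 : x ≠ 0 := (hc.trans hx.1).ne'
    have hnum : HasDerivAt (fun y ↦ 1 - cos (y ^ 2 + θ)) (sin (x ^ 2 + θ) * (2 * x)) x := by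
      simpa using ((hasDerivAt_pow 2 x).add_const θ).cos.const_sub 1
    refine ((hnum.div ((hasDerivAt_id x).const_mul 2) (by simpa using hx0)).congr_deriv ?_)
      |>.hasDerivWithinAt
    simp only [id]
    field_simp
  have hK_cont : ContinuousOn K (Icc c b) := by
    refine ContinuousOn.div (by fun_prop) (by fun_prop) fun x hx ↦ ?_
    linarith [hx.1]
  have hbound := sub_le_integral_of_hasDeriv_right_of_le hcb hK_cont hK
    ((by fun_prop : Continuous fun x : ℝ ↦ sin (x ^ 2 + θ)).integrableOn_Icc)
    fun x hx ↦ sub_le_self _ (div_nonneg (by linarith [cos_le_one (x ^ 2 + θ)]) (by positivity))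
  have hKb : 0 ≤ K b := div_nonneg (by linarith [cos_le_one (b ^ 2 + θ)]) (by linarith)
  have hKc : K c ≤ c⁻¹ := by
    rw [div_le_iff₀ (by positivity), inv_mul_eq_div, mul_div_assoc, div_self hc.ne', mul_one]
    linarith [neg_one_le_cos (c ^ 2 + θ)]
  linarith

lemma sin_sq_sub_sq_pos {a x : ℝ} (ha : 0 ≤ a) (hax : a < x) (hx : x ^ 2 < a ^ 2 + π) :
    0 < sin (x ^ 2 - a ^ 2) :=
  sin_pos_of_pos_of_lt_pi (by nlinarith) (by linarith)

lemma inv_lt_integral_sin_sq_sub_sq {a : ℝ} (ha : 0 ≤ a) :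
    (√(a ^ 2 + π))⁻¹ < ∫ x in a..√(a ^ 2 + π), sin (x ^ 2 - a ^ 2) := by
  set c := √(a ^ 2 + π)
  have hc2 : c ^ 2 = a ^ 2 + π := sq_sqrt (by positivity)
  have hc : 0 < c := sqrt_pos.mpr (by positivity)
  have hac : a < c := by nlinarith [pi_pos]
  have hsin : ∀ x ∈ Ioo a c, 0 < sin (x ^ 2 - a ^ 2) := fun x hx ↦
    sin_sq_sub_sq_pos ha hx.1 (hc2 ▸ pow_lt_pow_left₀ hx.2 (ha.trans hx.1.le) two_ne_zero)
  have hweighted : ∫ x in a..c, x / c * sin (x ^ 2 - a ^ 2) = c⁻¹ := by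
    have hderiv : ∀ x ∈ uIcc a c, HasDerivAt (fun y ↦ -cos (y ^ 2 - a ^ 2) / (2 * c))
        (x / c * sin (x ^ 2 - a ^ 2)) x := by
      intro x _
      refine (((hasDerivAt_pow 2 x).sub_const (a ^ 2)).cos.neg.div_const (2 * c)).congr_deriv ?_
      field_simp
      ring
    rw [integral_eq_sub_of_hasDerivAt hderiv ((by fun_prop : Continuous fun x : ℝ ↦
      x / c * sin (x ^ 2 - a ^ 2)).intervalIntegrable _ _), hc2]
    simp only [add_sub_cancel_left, cos_pi, sub_self, cos_zero]
    field_simp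
    norm_num
  rw [← hweighted]
  refine integral_lt_integral_of_continuousOn_of_le_of_exists_lt hac (by fun_prop) (by fun_prop)
    (fun x hx ↦ ?_) ⟨(a + c) / 2, ⟨by linarith, by linarith⟩, ?_⟩
  · rcases hx.2.eq_or_lt with rfl | hxc
    · rw [div_self hc.ne', one_mul]
    · exact mul_le_of_le_one_left (hsin x ⟨hx.1, hxc⟩).le ((div_le_one hc).mpr hxc.le)
  · exact mul_lt_of_lt_one_left (hsin _ ⟨by linarith, by linarith⟩)
      ((div_lt_one hc).mpr (by linarith))

lemma integral_sin_sq_sub_sq_pos {a b : ℝ} (ha : 0 ≤ a) (hab : a < b) :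
    0 < ∫ x in a..b, sin (x ^ 2 - a ^ 2) := by
  set c := √(a ^ 2 + π)
  have hc : 0 < c := sqrt_pos.mpr (by positivity)
  have hcont : Continuous fun x : ℝ ↦ sin (x ^ 2 - a ^ 2) := by fun_prop
  rcases le_or_gt b c with hbc | hcb
  · refine intervalIntegral_pos_of_pos_on (hcont.intervalIntegrable _ _)
      (fun x hx ↦ sin_sq_sub_sq_pos ha hx.1 ?_) hab
    calc x ^ 2 < c ^ 2 := pow_lt_pow_left₀ (hx.2.trans_le hbc) (ha.trans hx.1.le) two_ne_zero
      _ = a ^ 2 + π := sq_sqrt (by positivity)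
  · rw [← integral_add_adjacent_intervals (b := c) (hcont.intervalIntegrable _ _)
      (hcont.intervalIntegrable _ _)]
    have hfirst := inv_lt_integral_sin_sq_sub_sq ha
    have hsecond := neg_inv_le_integral_sin_sq_add (-a ^ 2) hc hcb.le
    simp only [← sub_eq_add_neg] at hsecond
    linarith

end RealEstimates

section FresnelIntegral

open Complex (I exp)

lemma im_integral_exp_I_mul {g : ℝ → ℝ} (hg : Continuous g) (a b : ℝ) :
    (∫ x in a..b, exp (I * g x)).im = ∫ x in a..b, Real.sin (g x) := by
  rw [← Complex.imCLM_apply, ← Complex.imCLM.intervalIntegral_comp_comm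
    ((by fun_prop : Continuous fun x ↦ exp (I * g x)).intervalIntegrable a b)]
  simp [mul_comm I, Complex.exp_ofReal_mul_I_im]

lemma integral_exp_I_mul_sq_ne_zero {a b : ℝ} (hab : a < b) :
    ∫ x in a..b, exp (I * ↑(x ^ 2)) ≠ 0 := by
  have hcont : Continuous fun x : ℝ ↦ exp (I * ↑(x ^ 2)) := by fun_prop
  have hrot : ∀ {a b : ℝ}, 0 ≤ a → a < b →
      0 < (exp (-(I * ↑(a ^ 2))) * ∫ x in a..b, exp (I * ↑(x ^ 2))).im := by
    intro a b ha hab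
    rw [← intervalIntegral.integral_const_mul]
    simp_rw [← Complex.exp_add]
    have := im_integral_exp_I_mul (g := fun x ↦ x ^ 2 - a ^ 2) (by fun_prop) a b
    push_cast at this ⊢
    simp_rw [show ∀ x : ℝ, -(I * (a : ℂ) ^ 2) + I * (x : ℂ) ^ 2 = I * ((x : ℂ) ^ 2 - (a : ℂ) ^ 2)
      from fun x ↦ by ring]
    exact this ▸ integral_sin_sq_sub_sq_pos ha hab
  have hreflect : ∀ a b : ℝ,
      ∫ x in a..b, exp (I * ↑(x ^ 2)) = ∫ x in -b..-a, exp (I * ↑(x ^ 2)) := fun a b ↦ by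
    rw [← integral_comp_neg]
    simp only [neg_sq]
  have hrot_ne : ∀ {a b : ℝ}, 0 ≤ a → a < b → ∫ x in a..b, exp (I * ↑(x ^ 2)) ≠ 0 :=
    fun ha hab h ↦ (hrot ha hab).ne' (by rw [h, mul_zero, Complex.zero_im])
  rcases le_or_gt 0 a with ha | ha
  · exact hrot_ne ha hab
  rcases le_or_gt b 0 with hb | hb
  · rw [hreflect]
    exact hrot_ne (by linarith) (by linarith)
  · intro h
    rw [← integral_add_adjacent_intervals (b := 0) (hcont.intervalIntegrable _ _)
      (hcont.intervalIntegrable _ _), hreflect a 0, neg_zero] at h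
    have h1 := hrot le_rfl (neg_pos.mpr ha)
    have h2 := hrot le_rfl hb
    simp only [zero_pow two_ne_zero, Complex.ofReal_zero, mul_zero, neg_zero, Complex.exp_zero,
      one_mul] at h1 h2
    have := congrArg Complex.im h
    simp only [Complex.add_im, Complex.zero_im] at this
    linarith

lemma integral_exp_I_mul_quadratic_ne_zero {A B C s t : ℝ} (hA : A ≠ 0) (hst : s < t) :
    ∫ x in s..t, exp (I * ↑(A * x ^ 2 + B * x + C)) ≠ 0 := by
  wlog hA_pos : 0 < A generalizing A B C
  · intro h
    refine this (A := -A) (B := -B) (C := -C) (neg_ne_zero.mpr hA)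
      (neg_pos.mpr (lt_of_le_of_ne (not_lt.mp hA_pos) hA)) ?_
    have := congrArg (starRingEnd ℂ) h
    rw [← intervalIntegral_conj, map_zero] at this
    rw [← this]
    congr 1 with x
    rw [← Complex.exp_conj, map_mul, Complex.conj_I, Complex.conj_ofReal]
    push_cast
    ring_nf
  set r := √A
  have hr : 0 < r := Real.sqrt_pos.mpr hA_pos
  set m := B / (2 * r)
  have hsquare : ∀ x : ℝ, A * x ^ 2 + B * x + C = (r * x + m) ^ 2 + (C - m ^ 2) := fun x ↦ by
    have : r ^ 2 = A := Real.sq_sqrt hA_pos.le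
    simp only [m]
    field_simp
    rw [← this]
    ring
  have hfactor : (fun x : ℝ ↦ exp (I * ↑(A * x ^ 2 + B * x + C)))
      = fun x ↦ exp (I * ↑(C - m ^ 2)) * exp (I * (((r * x + m) ^ 2 : ℝ) : ℂ)) := by
    ext x
    rw [hsquare, ← Complex.exp_add]
    congr 1
    push_cast
    ring
  have hsubst := integral_comp_mul_add (a := s) (b := t)
    (fun y : ℝ ↦ exp (I * ((y ^ 2 : ℝ) : ℂ))) hr.ne' m
  rw [hfactor, intervalIntegral.integral_const_mul, hsubst]
  exact mul_ne_zero (Complex.exp_ne_zero _) (smul_ne_zero (inv_ne_zero hr.ne')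
    (integral_exp_I_mul_sq_ne_zero (by nlinarith)))

lemma two_pi_le_abs_mul_of_integral_exp_I_mul_affine_eq_zero {B C s t : ℝ} (hst : s < t)
    (h : ∫ x in s..t, exp (I * ↑(B * x + C)) = 0) : 2 * π ≤ |B| * (t - s) := by
  have hB : B ≠ 0 := by
    rintro rfl
    simp [sub_eq_zero, hst.ne'] at h
  have hIB : I * B ≠ 0 := mul_ne_zero Complex.I_ne_zero (by exact_mod_cast hB)
  have hfactor : (fun x : ℝ ↦ exp (I * ↑(B * x + C)))
      = fun x : ℝ ↦ exp (I * C) * exp (I * B * x) := by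
    ext x
    rw [← Complex.exp_add]
    congr 1
    push_cast
    ring
  rw [hfactor, intervalIntegral.integral_const_mul, integral_exp_mul_complex hIB] at h
  obtain ⟨n, hn⟩ := Complex.exp_eq_exp_iff_exists_int.mp
    (sub_eq_zero.mp (by simpa [Complex.exp_ne_zero, hIB] using h))
  have hBn : B * (t - s) = 2 * π * n := by
    refine Complex.ofReal_injective (mul_left_cancel₀ Complex.I_ne_zero ?_)
    push_cast
    linear_combination hn
  have hn0 : n ≠ 0 := by
    rintro rfl
    simp [hB, sub_eq_zero, hst.ne'] at hBn
  have hpi : 0 < 2 * π := by positivity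
  calc 2 * π ≤ 2 * π * |(n : ℝ)| := le_mul_of_one_le_right hpi.le
        (by exact_mod_cast Int.one_le_abs hn0)
    _ = |B * (t - s)| := by rw [hBn, abs_mul, abs_of_pos hpi]
    _ = |B| * (t - s) := by rw [abs_mul, abs_of_pos (sub_pos.mpr hst)]

end FresnelIntegral

lemma integral_eq_zero_of_apply_eq {f : ℝ → ℂ} (hf : Continuous f) {v : ℝ} (hv : v ≠ 0)
    {p₀ : ℂ} {p : ℝ → ℂ} (hp : ∀ t, p t = p₀ + v * ∫ s in (0 : ℝ)..t, f s) {s t : ℝ}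
    (hst : p s = p t) : ∫ x in s..t, f x = 0 := by
  rw [hp, hp, add_right_inj, mul_right_inj' (Complex.ofReal_ne_zero.mpr hv)] at hst
  rw [← integral_interval_sub_left (hf.intervalIntegrable 0 t) (hf.intervalIntegrable 0 s), hst,
    sub_self]

lemma Polynomial.eval_eq_quadratic {P : Polynomial ℝ} (hP : P.natDegree ≤ 2) (x : ℝ) :
    P.eval x = P.coeff 2 * x ^ 2 + P.coeff 1 * x + P.coeff 0 := by
  simpa using congrArg (Polynomial.eval x)
    (Polynomial.eq_quadratic_of_degree_le_two (Polynomial.natDegree_le_iff_degree_le.mp hP))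

/-- A regular curve in `𝒦₁` (tangent angle a polynomial of degree at most 2,
constant speed `v > 0`) is embedded unless it parametrizes a full circle, i.e. unless the
tangent angle is affine and the total turning is at least `2π` (Tait–Kneser). -/
theorem clothoid_embedded_unless_full_circle
    (P : Polynomial ℝ) (hP : P.natDegree ≤ 2)
    (v : ℝ) (hv : 0 < v) (p0 : ℂ) (p : ℝ → ℂ)
    (hp : ∀ t, p t = p0 + v * ∫ s in (0:ℝ)..t, Complex.exp (Complex.I * (P.eval s)))
    (hnotinj : ¬ Set.InjOn p (Set.Icc (0:ℝ) 1)) :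
    P.natDegree ≤ 1 ∧ 2 * π ≤ |P.eval 1 - P.eval 0| := by
  obtain ⟨s, hs, t, ht, hpst, hne⟩ :
      ∃ s ∈ Icc (0 : ℝ) 1, ∃ t ∈ Icc (0 : ℝ) 1, p s = p t ∧ s ≠ t := by
    simpa only [InjOn, not_forall, exists_prop] using hnotinj
  wlog hst : s < t generalizing s t
  · exact this t ht s hs hpst.symm hne.symm (hne.lt_or_gt.resolve_left hst)
  have hzero := integral_eq_zero_of_apply_eq (by fun_prop) hv.ne' hp hpst
  simp only [Polynomial.eval_eq_quadratic hP] at hzero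
  have hA : P.coeff 2 = 0 := by
    by_contra hA
    exact integral_exp_I_mul_quadratic_ne_zero hA hst hzero
  refine ⟨?_, ?_⟩
  · rw [Polynomial.eq_quadratic_of_degree_le_two (Polynomial.natDegree_le_iff_degree_le.mp hP), hA]
    simp only [map_zero, zero_mul, zero_add]
    exact Polynomial.natDegree_linear_le
  · simp only [hA, zero_mul, zero_add] at hzero
    rw [Polynomial.eval_eq_quadratic hP, Polynomial.eval_eq_quadratic hP, hA]
    calc 2 * π ≤ |P.coeff 1| * (t - s) :=
          two_pi_le_abs_mul_of_integral_exp_I_mul_affine_eq_zero hst hzero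
      _ ≤ |P.coeff 1| := mul_le_of_le_one_right (abs_nonneg _) (by linarith [hs.1, ht.2])
      _ = _ := by ring_nf
end

section
/- There exist u > 0 and a C^∞ (infinitely differentiable) function F : (−u,u)² → ℝ² with F(0,0) = (0,1) and total derivative at the origin DF(0,0) equal to the 2×2 matrix with first row (−1/4, −1/4) and second row (0, 0), such that for every (β0,β1) ∈ (−u,u)², writing (β_{1/2}, w) := F(β0,β1) and β := β0·ℓ²_0 + β_{1/2}·ℓ²_{1/2} + β1·ℓ²_1, one has w > 0 and I(β) = 1/w (in particular I(β) is real and positive). Consequently the curve q := w·I(β,·) satisfies q(0) = 0, q(1) = 1, q′(t) = w·exp(i·β(t)), and its tangent angle β satisfies β(0) = β0 and β(1) = β1, i.e., q ∈ 𝒦₁⁺ solves the two-point geometric Hermite interpolation problem in normal position. -/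
open scoped Real

/-- Quadratic Lagrange polynomial at the break point `0` (nodes `0, 1/2, 1`). -/
noncomputable def lag0 (t : ℝ) : ℝ := (t - 1) * (2 * t - 1)

/-- Quadratic Lagrange polynomial at the break point `1/2` (nodes `0, 1/2, 1`). -/
noncomputable def lagHalf (t : ℝ) : ℝ := 4 * t * (1 - t)

/-- Quadratic Lagrange polynomial at the break point `1` (nodes `0, 1/2, 1`). -/
noncomputable def lag1 (t : ℝ) : ℝ := t * (2 * t - 1)

/-- `I(β,t) := ∫₀ᵗ exp(i·β(s)) ds`. -/
noncomputable def Iint (β : ℝ → ℝ) (t : ℝ) : ℂ :=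
  ∫ s in (0:ℝ)..t, Complex.exp (Complex.I * (β s : ℂ))

noncomputable section ClothoidAux
open NormedSpace intervalIntegral

abbrev X01 : Type := Set.Icc (0:ℝ) 1
abbrev CA : Type := C(X01, ℂ)
abbrev E3 : Type := ℝ × ℝ × ℝ

/-- continuous map `s ↦ i f s` on `[0,1]`. -/
def cmI (f : ℝ → ℝ) (hf : Continuous f) : CA :=
  ⟨fun x => Complex.I * (f x : ℂ),
    (continuous_const.mul (Complex.continuous_ofReal.comp (hf.comp continuous_subtype_val)))⟩

lemma cmI_apply (f : ℝ → ℝ) (hf : Continuous f) (x : X01) :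
    cmI f hf x = Complex.I * (f x : ℂ) := rfl

lemma lag0_cont : Continuous lag0 := by unfold lag0; fun_prop
lemma lag1_cont : Continuous lag1 := by unfold lag1; fun_prop
lemma lagH_cont : Continuous lagHalf := by unfold lagHalf; fun_prop

def ca0 : CA := cmI lag0 lag0_cont
def ca1 : CA := cmI lag1 lag1_cont
def caH : CA := cmI lagHalf lagH_cont

def Tlm : E3 →ₗ[ℝ] CA where
  toFun v := v.1 • ca0 + v.2.1 • ca1 + v.2.2 • caH
  map_add' a b := by
    simp only [Prod.fst_add, Prod.snd_add]
    module
  map_smul' r a := by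
    simp only [Prod.smul_fst, Prod.smul_snd, smul_eq_mul, RingHom.id_apply]
    module

def Tc : E3 →L[ℝ] CA :=
  Tlm.mkContinuous (‖ca0‖ + ‖ca1‖ + ‖caH‖) (by
    intro v
    have h0 : ‖v.1 • ca0‖ ≤ ‖v‖ * ‖ca0‖ :=
      (_root_.norm_smul_le (α := ℝ) (β := CA) _ _).trans
        (mul_le_mul_of_nonneg_right (norm_fst_le v) (norm_nonneg _))
    have h1 : ‖v.2.1 • ca1‖ ≤ ‖v‖ * ‖ca1‖ :=
      (_root_.norm_smul_le (α := ℝ) (β := CA) _ _).trans (mul_le_mul_of_nonneg_right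
        (le_trans (norm_fst_le v.2) (norm_snd_le v)) (norm_nonneg _))
    have h2 : ‖v.2.2 • caH‖ ≤ ‖v‖ * ‖caH‖ :=
      (_root_.norm_smul_le (α := ℝ) (β := CA) _ _).trans (mul_le_mul_of_nonneg_right
        (le_trans (norm_snd_le v.2) (norm_snd_le v)) (norm_nonneg _))
    calc ‖Tlm v‖ ≤ ‖v.1 • ca0‖ + ‖v.2.1 • ca1‖ + ‖v.2.2 • caH‖ := norm_add₃_le
      _ ≤ ‖v‖ * ‖ca0‖ + ‖v‖ * ‖ca1‖ + ‖v‖ * ‖caH‖ := by gcongr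
      _ = (‖ca0‖ + ‖ca1‖ + ‖caH‖) * ‖v‖ := by ring)

lemma Tc_apply (v : E3) (x : X01) :
    Tc v x = Complex.I * ((v.1 * lag0 x + v.2.1 * lag1 x + v.2.2 * lagHalf x : ℝ) : ℂ) := by
  show (Tlm v) x = _
  simp only [Tlm, LinearMap.coe_mk, AddHom.coe_mk, ContinuousMap.add_apply,
    ContinuousMap.smul_apply, ca0, ca1, caH, cmI_apply, smul_eq_mul, Complex.real_smul]
  push_cast
  ring

def Llm : CA →ₗ[ℝ] ℂ where
  toFun f := ∫ s in (0:ℝ)..1, f (Set.projIcc 0 1 zero_le_one s)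
  map_add' f g := by
    simp only [ContinuousMap.add_apply]
    exact intervalIntegral.integral_add
      ((f.continuous.comp continuous_projIcc).intervalIntegrable _ _)
      ((g.continuous.comp continuous_projIcc).intervalIntegrable _ _)
  map_smul' r f := by
    simp only [ContinuousMap.smul_apply, RingHom.id_apply]
    exact intervalIntegral.integral_smul r _

def Lc : CA →L[ℝ] ℂ :=
  Llm.mkContinuous 1 (by
    intro f
    have := intervalIntegral.norm_integral_le_of_norm_le_const
      (a := (0:ℝ)) (b := 1) (C := ‖f‖) (f := fun s => f (Set.projIcc 0 1 zero_le_one s))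
      (fun s _ => f.norm_coe_le_norm _)
    simpa [Llm] using this)

lemma Lc_apply (f : CA) (f₀ : ℝ → ℂ)
    (h : ∀ s, (hs : s ∈ Set.Icc (0:ℝ) 1) → f ⟨s, hs⟩ = f₀ s) :
    Lc f = ∫ s in (0:ℝ)..1, f₀ s := by
  show ∫ s in (0:ℝ)..1, f (Set.projIcc 0 1 zero_le_one s) = _
  apply intervalIntegral.integral_congr
  intro s hs
  rw [Set.uIcc_of_le zero_le_one] at hs
  show f (Set.projIcc 0 1 zero_le_one s) = f₀ s
  rw [Set.projIcc_of_mem _ hs]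
  exact h s hs

lemma exp_pointwise (f : CA) (x : X01) : (exp f) x = Complex.exp (f x) := by
  have := NormedSpace.map_exp (ContinuousMap.evalAlgHom ℝ ℂ x (X := X01))
    (ContinuousEvalConst.continuous_eval_const x) f
  simp only [ContinuousMap.evalAlgHom_apply] at this
  rw [this, Complex.exp_eq_exp_ℂ]

def Jc : E3 → ℂ := fun v => Lc (exp (Tc v))

lemma Jc_eq (v : E3) (β : ℝ → ℝ)
    (hβ : ∀ t, β t = v.1 * lag0 t + v.2.2 * lagHalf t + v.2.1 * lag1 t) :
    Jc v = Iint β 1 := by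
  rw [Jc, Lc_apply _ (fun s => Complex.exp (Complex.I * (β s : ℂ)))]
  · rfl
  · intro s hs
    rw [exp_pointwise, Tc_apply, hβ]
    norm_num
    ring_nf

lemma quad_integral (A B C : ℝ) :
    ∫ s in (0:ℝ)..1, (A * s ^ 2 + B * s + C) = A / 3 + B / 2 + C := by
  have h1 : IntervalIntegrable (fun s : ℝ => A * s ^ 2) MeasureTheory.volume 0 1 :=
    (by fun_prop : Continuous fun s : ℝ => A * s ^ 2).intervalIntegrable _ _
  have h2 : IntervalIntegrable (fun s : ℝ => B * s) MeasureTheory.volume 0 1 :=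
    (by fun_prop : Continuous fun s : ℝ => B * s).intervalIntegrable _ _
  have h3 : IntervalIntegrable (fun s : ℝ => C) MeasureTheory.volume 0 1 :=
    intervalIntegrable_const
  rw [intervalIntegral.integral_add (h1.add h2) h3, intervalIntegral.integral_add h1 h2,
    intervalIntegral.integral_const_mul, intervalIntegral.integral_const_mul,
    integral_pow, integral_id, intervalIntegral.integral_const, smul_eq_mul]
  push_cast
  ring

lemma lag_integral (z : E3) :
    ∫ s in (0:ℝ)..1, (z.1 * lag0 s + z.2.1 * lag1 s + z.2.2 * lagHalf s)
      = z.1 / 6 + z.2.1 / 6 + 2 * z.2.2 / 3 := by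
  have : ∀ s : ℝ, z.1 * lag0 s + z.2.1 * lag1 s + z.2.2 * lagHalf s
      = (2 * z.1 + 2 * z.2.1 - 4 * z.2.2) * s ^ 2
        + (-3 * z.1 - z.2.1 + 4 * z.2.2) * s + z.1 := by
    intro s; unfold lag0 lag1 lagHalf; ring
  rw [intervalIntegral.integral_congr (fun s _ => this s), quad_integral]
  ring

lemma Lc_Tc (z : E3) :
    Lc (Tc z) = Complex.I * ((z.1 / 6 + z.2.1 / 6 + 2 * z.2.2 / 3 : ℝ) : ℂ) := by
  rw [Lc_apply _ (fun s => ((z.1 * lag0 s + z.2.1 * lag1 s + z.2.2 * lagHalf s : ℝ)) • Complex.I)]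
  · rw [intervalIntegral.integral_smul_const, lag_integral]
    rw [Complex.real_smul]; ring
  · intro s hs
    rw [Tc_apply, Complex.real_smul]; ring

section S2
open NormedSpace intervalIntegral

lemma contDiff_Jc : ContDiff ℝ (⊤ : ℕ∞) Jc := by
  have hexp : ContDiff ℝ (⊤ : ℕ∞) (exp : CA → CA) :=
    contDiff_iff_contDiffAt.2 fun x => (exp_analytic x).contDiffAt
  exact Lc.contDiff.comp (hexp.comp Tc.contDiff)

/-- derivative of `Jc` at `v`. -/
def DJ (v : E3) : E3 →L[ℝ] ℂ :=
  Lc.comp (((exp (Tc v)) • (1 : CA →L[ℝ] CA)).comp Tc)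

lemma DJ_apply (v z : E3) : DJ v z = Lc (exp (Tc v) * Tc z) := by
  simp [DJ, ContinuousLinearMap.smul_apply, smul_eq_mul]

lemma hasFDerivAt_Jc (v : E3) : HasFDerivAt Jc (DJ v) v :=
  Lc.hasFDerivAt.comp v ((hasFDerivAt_exp (𝕂 := ℝ) (x := Tc v)).comp v Tc.hasFDerivAt)

def gIm : E3 → ℝ := fun v => (Jc v).im

def Dg (v : E3) : E3 →L[ℝ] ℝ := Complex.imCLM.comp (DJ v)

lemma hasFDerivAt_g (v : E3) : HasFDerivAt gIm (Dg v) v :=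
  Complex.imCLM.hasFDerivAt.comp v (hasFDerivAt_Jc v)

lemma contDiff_g : ContDiff ℝ (⊤ : ℕ∞) gIm := Complex.imCLM.contDiff.comp contDiff_Jc

def Phi : E3 → E3 := fun v => (v.1, v.2.1, gIm v)

lemma contDiff_Phi : ContDiff ℝ (⊤ : ℕ∞) Phi :=
  contDiff_fst.prodMk ((contDiff_fst.comp contDiff_snd).prodMk contDiff_g)

lemma Tc_zero : Tc (0 : E3) = 0 := map_zero Tc

lemma Jc_zero : Jc 0 = 1 := by
  rw [Jc, Tc_zero, exp_zero]
  rw [Lc_apply _ (fun _ => (1:ℂ)) (fun s hs => rfl)]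
  simp

lemma g_zero : gIm 0 = 0 := by rw [gIm, Jc_zero]; simp

lemma Phi_zero : Phi 0 = 0 := by
  simp [Phi, g_zero]

lemma DJ_zero (z : E3) : DJ 0 z = Complex.I * ((z.1 / 6 + z.2.1 / 6 + 2 * z.2.2 / 3 : ℝ) : ℂ) := by
  rw [DJ_apply, Tc_zero, exp_zero, one_mul, Lc_Tc]

lemma Dg_zero (z : E3) : Dg 0 z = z.1 / 6 + z.2.1 / 6 + 2 * z.2.2 / 3 := by
  simp [Dg, DJ_zero]

/-- the continuous linear equivalence `(x,y,z) ↦ (x, y, c (x,y,z))` when `c (0,0,1) ≠ 0`. -/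
def eTri (c : E3 →L[ℝ] ℝ) (hc : c (0,0,1) ≠ 0) : E3 ≃L[ℝ] E3 :=
  LinearEquiv.toContinuousLinearEquiv
  { toFun := fun z => (z.1, z.2.1, c z)
    invFun := fun w => (w.1, w.2.1, (w.2.2 - c (w.1, w.2.1, 0)) / c (0,0,1))
    map_add' := fun a b => by
      ext <;> simp [Prod.fst_add, Prod.snd_add]
    map_smul' := fun r a => by
      ext <;> simp [Prod.smul_fst, Prod.smul_snd, mul_comm]
    left_inv := fun z => by
      have hz : c z = c (z.1, z.2.1, 0) + z.2.2 * c (0,0,1) := by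
        have h2 : z = (z.1, z.2.1, (0:ℝ)) + z.2.2 • ((0:ℝ),(0:ℝ),(1:ℝ)) := by
          ext <;> simp
        conv_lhs => rw [h2]
        rw [map_add, map_smul, smul_eq_mul]
      refine Prod.ext rfl (Prod.ext rfl ?_)
      show (c z - c (z.1, z.2.1, 0)) / c (0,0,1) = z.2.2
      rw [hz]; field_simp; ring
    right_inv := fun w => by
      refine Prod.ext rfl (Prod.ext rfl ?_)
      show c (w.1, w.2.1, (w.2.2 - c (w.1, w.2.1, 0)) / c (0,0,1)) = w.2.2
      have h2 : ((w.1, w.2.1, (w.2.2 - c (w.1, w.2.1, 0)) / c (0,0,1)) : E3)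
          = (w.1, w.2.1, (0:ℝ)) + ((w.2.2 - c (w.1, w.2.1, 0)) / c (0,0,1)) • ((0:ℝ),(0:ℝ),(1:ℝ)) := by
        ext <;> simp
      rw [h2, map_add, map_smul, smul_eq_mul]
      field_simp; ring }

lemma eTri_apply (c : E3 →L[ℝ] ℝ) (hc : c (0,0,1) ≠ 0) (z : E3) :
    eTri c hc z = (z.1, z.2.1, c z) := by
  simp [eTri]

lemma eTri_symm_apply (c : E3 →L[ℝ] ℝ) (hc : c (0,0,1) ≠ 0) (w : E3) :
    (eTri c hc).symm w = (w.1, w.2.1, (w.2.2 - c (w.1, w.2.1, 0)) / c (0,0,1)) := by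
  simp [eTri]

lemma hasFDerivAt_Phi (v : E3) (hc : Dg v (0,0,1) ≠ 0) :
    HasFDerivAt Phi ((eTri (Dg v) hc : E3 →L[ℝ] E3)) v := by
  have h1 : HasFDerivAt (fun v : E3 => v.1) (ContinuousLinearMap.fst ℝ ℝ (ℝ × ℝ)) v :=
    (ContinuousLinearMap.fst ℝ ℝ (ℝ × ℝ)).hasFDerivAt
  have h2 : HasFDerivAt (fun v : E3 => v.2.1)
      ((ContinuousLinearMap.fst ℝ ℝ ℝ).comp (ContinuousLinearMap.snd ℝ ℝ (ℝ × ℝ))) v :=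
    ((ContinuousLinearMap.fst ℝ ℝ ℝ).comp (ContinuousLinearMap.snd ℝ ℝ (ℝ × ℝ))).hasFDerivAt
  have h := h1.prodMk (h2.prodMk (hasFDerivAt_g v))
  have he : ((eTri (Dg v) hc : E3 →L[ℝ] E3))
      = (ContinuousLinearMap.fst ℝ ℝ (ℝ × ℝ)).prod
        ((((ContinuousLinearMap.fst ℝ ℝ ℝ).comp (ContinuousLinearMap.snd ℝ ℝ (ℝ × ℝ)))).prod (Dg v)) := by
    apply ContinuousLinearMap.ext
    intro z
    simp [eTri_apply]
  rw [he]
  exact h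

end S2

section S3
open NormedSpace Metric

lemma hc0 : Dg 0 ((0:ℝ),(0:ℝ),(1:ℝ)) ≠ 0 := by rw [Dg_zero]; norm_num

def e0 : E3 ≃L[ℝ] E3 := eTri (Dg 0) hc0

lemma hstrictPhi : HasStrictFDerivAt Phi (e0 : E3 →L[ℝ] E3) 0 :=
  contDiff_Phi.contDiffAt.hasStrictFDerivAt' (hasFDerivAt_Phi 0 hc0) (by simp)

def Pm : OpenPartialHomeomorph E3 E3 := hstrictPhi.toOpenPartialHomeomorph Phi

lemma Pm_coe : ⇑Pm = Phi := rfl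

lemma Pm_source : (0:E3) ∈ Pm.source := hstrictPhi.mem_toOpenPartialHomeomorph_source

lemma Pm_target : (0:E3) ∈ Pm.target := by
  have := hstrictPhi.image_mem_toOpenPartialHomeomorph_target
  rwa [Phi_zero] at this

lemma Pm_symm_zero : Pm.symm 0 = 0 := by
  have := Pm.left_inv Pm_source
  rwa [Pm_coe, Phi_zero] at this

lemma hSymmDeriv : HasFDerivAt Pm.symm ((e0.symm : E3 →L[ℝ] E3)) 0 := by
  have h := hstrictPhi.to_localInverse (f := Phi)
  rw [hstrictPhi.localInverse_def, Phi_zero] at h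
  exact h.hasFDerivAt

def Wset : Set E3 := {x | Dg x ((0:ℝ),(0:ℝ),(1:ℝ)) ≠ 0 ∧ 0 < (Jc x).re}

lemma Dg_e3 (x : E3) : Dg x ((0:ℝ),(0:ℝ),(1:ℝ))
    = (Lc (exp (Tc x) * Tc ((0:ℝ),(0:ℝ),(1:ℝ)))).im := by
  simp [Dg, DJ_apply]

lemma isOpen_W : IsOpen Wset := by
  have hc : Continuous fun x : E3 => Dg x ((0:ℝ),(0:ℝ),(1:ℝ)) := by
    simp only [Dg_e3]
    exact Complex.continuous_im.comp (Lc.continuous.comp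
      (((exp_continuous).comp Tc.continuous).mul continuous_const))
  have hre : Continuous fun x : E3 => (Jc x).re :=
    Complex.continuous_re.comp contDiff_Jc.continuous
  exact ((isOpen_compl_singleton.preimage hc)).inter (isOpen_lt continuous_const hre)

lemma zero_mem_W : (0:E3) ∈ Wset := by
  constructor
  · exact hc0
  · rw [Jc_zero]; norm_num

def Vset : Set E3 := Pm.target ∩ Pm.symm ⁻¹' Wset

lemma isOpen_V : IsOpen Vset :=
  Pm.continuousOn_symm.isOpen_inter_preimage Pm.open_target isOpen_W

lemma zero_mem_V : (0:E3) ∈ Vset :=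
  ⟨Pm_target, by rw [Set.mem_preimage, Pm_symm_zero]; exact zero_mem_W⟩

def iotaL : (ℝ × ℝ) →L[ℝ] E3 :=
  (ContinuousLinearMap.fst ℝ ℝ ℝ).prod ((ContinuousLinearMap.snd ℝ ℝ ℝ).prod 0)

lemma iotaL_apply (p : ℝ × ℝ) : iotaL p = (p.1, p.2, (0:ℝ)) := rfl

/-- smoothness of the local inverse at each good point. -/
lemma symm_contDiffAt {y : E3} (hy : y ∈ Vset) : ContDiffAt ℝ (⊤ : ℕ∞) Pm.symm y := by
  have hW := hy.2
  rw [Set.mem_preimage] at hW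
  exact Pm.contDiffAt_symm hy.1 (f₀' := eTri (Dg (Pm.symm y)) hW.1)
    (by rw [Pm_coe]; exact hasFDerivAt_Phi _ hW.1) (by rw [Pm_coe]; exact contDiff_Phi.contDiffAt)

end S3

end ClothoidAux

/-- There is a smooth solution map `F` of the two-point geometric Hermite
interpolation problem in normal position by clothoids, defined near the origin, with
`F(0,0) = (0,1)` and `DF(0,0) = [[-1/4,-1/4],[0,0]]`: writing `(β_{1/2}, w) := F(β₀,β₁)`
and `β := β₀·ℓ²₀ + β_{1/2}·ℓ²_{1/2} + β₁·ℓ²₁`, one has `w > 0`, `I(β) = 1/w`, and the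
curve `q := w·I(β,·)` satisfies `q(0)=0`, `q(1)=1`, `q'(t) = w·exp(i·β(t))`, `β(0)=β₀`,
`β(1)=β₁`. -/
theorem exists_clothoid_solution_map :
    ∃ u > (0:ℝ), ∃ F : ℝ × ℝ → ℝ × ℝ,
      ContDiffOn ℝ (⊤ : ℕ∞) F (Set.Ioo (-u) u ×ˢ Set.Ioo (-u) u) ∧
      F (0, 0) = (0, 1) ∧
      (∃ D : ℝ × ℝ →L[ℝ] ℝ × ℝ, (∀ x : ℝ × ℝ, D x = (-(x.1 + x.2) / 4, 0)) ∧
        HasFDerivAt F D (0 : ℝ × ℝ)) ∧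
      ∀ β0 β1 : ℝ, β0 ∈ Set.Ioo (-u) u → β1 ∈ Set.Ioo (-u) u →
        ∀ βh w : ℝ, (βh, w) = F (β0, β1) →
        ∀ β : ℝ → ℝ, (∀ t, β t = β0 * lag0 t + βh * lagHalf t + β1 * lag1 t) →
          0 < w ∧ Iint β 1 = (w : ℂ)⁻¹ ∧
          (∀ q : ℝ → ℂ, (∀ t, q t = w * Iint β t) →
            q 0 = 0 ∧ q 1 = 1 ∧
            (∀ t : ℝ, HasDerivAt q (w * Complex.exp (Complex.I * (β t : ℂ))) t)) ∧
          β 0 = β0 ∧ β 1 = β1 := by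
  obtain ⟨u, hu, hball⟩ : ∃ u > 0, Metric.ball ((0:ℝ),(0:ℝ)) u ⊆ iotaL ⁻¹' Vset := by
    have h0 : ((0:ℝ),(0:ℝ)) ∈ iotaL ⁻¹' Vset := by
      have : iotaL ((0:ℝ),(0:ℝ)) = (0:E3) := rfl
      rw [Set.mem_preimage, this]
      exact zero_mem_V
    obtain ⟨e, he, hsub⟩ := Metric.isOpen_iff.1 (isOpen_V.preimage iotaL.continuous) _ h0
    exact ⟨e, he, hsub⟩
  have hbox : ∀ p : ℝ × ℝ, p ∈ Set.Ioo (-u) u ×ˢ Set.Ioo (-u) u → iotaL p ∈ Vset := by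
    intro p hp
    apply hball
    have : p ∈ Metric.ball (0:ℝ) u ×ˢ Metric.ball (0:ℝ) u := by
      refine ⟨?_, ?_⟩
      · rw [Real.ball_eq_Ioo]; simpa using hp.1
      · rw [Real.ball_eq_Ioo]; simpa using hp.2
    rwa [ball_prod_same] at this
  refine ⟨u, hu, fun p => ((Pm.symm (iotaL p)).2.2, ((Jc (Pm.symm (iotaL p))).re)⁻¹),
    ?_, ?_, ?_, ?_⟩
  · -- smoothness
    intro p hp
    have hv := hbox p hp
    have hW : Pm.symm (iotaL p) ∈ Wset := hv.2
    have hcomp : ContDiffAt ℝ (⊤ : ℕ∞) (fun q : ℝ × ℝ => Pm.symm (iotaL q)) p :=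
      (symm_contDiffAt hv).comp p iotaL.contDiff.contDiffAt
    have h1 : ContDiffAt ℝ (⊤ : ℕ∞) (fun q : ℝ × ℝ => (Pm.symm (iotaL q)).2.2) p :=
      (contDiff_snd.comp contDiff_snd).contDiffAt.comp p hcomp
    have h2 : ContDiffAt ℝ (⊤ : ℕ∞) (fun q : ℝ × ℝ => ((Jc (Pm.symm (iotaL q))).re)⁻¹) p := by
      have hr : ContDiffAt ℝ (⊤ : ℕ∞) (fun q : ℝ × ℝ => (Jc (Pm.symm (iotaL q))).re) p :=
        (Complex.reCLM.contDiff.comp contDiff_Jc).contDiffAt.comp p hcomp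
      exact hr.inv (ne_of_gt hW.2)
    exact (h1.prodMk h2).contDiffWithinAt
  · -- value at 0
    show ((Pm.symm (iotaL ((0:ℝ),(0:ℝ)))).2.2, ((Jc (Pm.symm (iotaL ((0:ℝ),(0:ℝ))))).re)⁻¹)
      = ((0:ℝ), (1:ℝ))
    rw [show iotaL ((0:ℝ),(0:ℝ)) = (0:E3) from rfl, Pm_symm_zero, Jc_zero]
    norm_num
  · -- derivative at 0
    have e0_symm_iota : ∀ x : ℝ × ℝ,
        (e0.symm : E3 →L[ℝ] E3) (iotaL x) = (x.1, x.2, -(x.1 + x.2)/4) := by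
      intro x
      show e0.symm (iotaL x) = _
      rw [iotaL_apply, e0, eTri_symm_apply]
      refine Prod.ext rfl (Prod.ext rfl ?_)
      show ((0:ℝ) - Dg 0 (x.1, x.2, 0)) / Dg 0 ((0:ℝ),(0:ℝ),(1:ℝ)) = -(x.1 + x.2)/4
      rw [Dg_zero, Dg_zero]
      norm_num
      field_simp
      ring
    set π₃ : E3 →L[ℝ] ℝ :=
      (ContinuousLinearMap.snd ℝ ℝ ℝ).comp (ContinuousLinearMap.snd ℝ ℝ (ℝ × ℝ)) with hπ₃
    refine ⟨(π₃.comp ((e0.symm : E3 →L[ℝ] E3).comp iotaL)).prod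
      ((-((1:ℝ)^2)⁻¹) • ((Complex.reCLM.comp (DJ 0)).comp
        ((e0.symm : E3 →L[ℝ] E3).comp iotaL))), ?_, ?_⟩
    · intro x
      refine Prod.ext ?_ ?_
      · show π₃ ((e0.symm : E3 →L[ℝ] E3) (iotaL x)) = -(x.1 + x.2)/4
        rw [e0_symm_iota]
        rfl
      · show (-((1:ℝ)^2)⁻¹) • Complex.reCLM (DJ 0 ((e0.symm : E3 →L[ℝ] E3) (iotaL x))) = 0
        rw [e0_symm_iota, DJ_zero]
        simp
    · have hION : HasFDerivAt (fun q : ℝ × ℝ => Pm.symm (iotaL q))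
          ((e0.symm : E3 →L[ℝ] E3).comp iotaL) ((0:ℝ),(0:ℝ)) :=
        HasFDerivAt.comp _ hSymmDeriv iotaL.hasFDerivAt
      have h1 : HasFDerivAt (fun q : ℝ × ℝ => (Pm.symm (iotaL q)).2.2)
          (π₃.comp ((e0.symm : E3 →L[ℝ] E3).comp iotaL)) ((0:ℝ),(0:ℝ)) :=
        π₃.hasFDerivAt.comp _ hION
      have hJ : HasFDerivAt (fun x : E3 => (Jc x).re) (Complex.reCLM.comp (DJ 0))
          (Pm.symm (iotaL ((0:ℝ),(0:ℝ)))) := by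
        rw [show Pm.symm (iotaL ((0:ℝ),(0:ℝ))) = 0 from by
          rw [show iotaL ((0:ℝ),(0:ℝ)) = (0:E3) from rfl, Pm_symm_zero]]
        exact Complex.reCLM.hasFDerivAt.comp _ (hasFDerivAt_Jc 0)
      have hJre : HasFDerivAt (fun q : ℝ × ℝ => (Jc (Pm.symm (iotaL q))).re)
          ((Complex.reCLM.comp (DJ 0)).comp ((e0.symm : E3 →L[ℝ] E3).comp iotaL))
          ((0:ℝ),(0:ℝ)) := by have := hJ.comp ((0:ℝ),(0:ℝ)) hION; exact this
      have hval : (Jc (Pm.symm (iotaL ((0:ℝ),(0:ℝ))))).re = 1 := by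
        rw [show iotaL ((0:ℝ),(0:ℝ)) = (0:E3) from rfl, Pm_symm_zero, Jc_zero]; simp
      have h2 : HasFDerivAt (fun q : ℝ × ℝ => ((Jc (Pm.symm (iotaL q))).re)⁻¹)
          ((-((1:ℝ)^2)⁻¹) • ((Complex.reCLM.comp (DJ 0)).comp
            ((e0.symm : E3 →L[ℝ] E3).comp iotaL))) ((0:ℝ),(0:ℝ)) := by
        have hinv : HasDerivAt (fun y : ℝ => y⁻¹) (-((1:ℝ)^2)⁻¹)
            ((Jc (Pm.symm (iotaL ((0:ℝ),(0:ℝ))))).re) := by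
          rw [hval]; exact hasDerivAt_inv one_ne_zero
        exact hinv.comp_hasFDerivAt ((0:ℝ),(0:ℝ)) hJre
      exact h1.prodMk h2
  · -- the interpolation properties
    intro β0 β1 hβ0 hβ1 βh w hβw β hβ
    have hv : iotaL (β0, β1) ∈ Vset := hbox (β0, β1) ⟨hβ0, hβ1⟩
    set x := Pm.symm (iotaL (β0, β1)) with hxdef
    have hW : x ∈ Wset := hv.2
    have hβh : βh = x.2.2 := congrArg Prod.fst hβw
    have hw : w = ((Jc x).re)⁻¹ := congrArg Prod.snd hβw
    have hri : Phi x = iotaL (β0, β1) := Pm.right_inv hv.1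
    have h1 : x.1 = β0 := congrArg (fun z : E3 => z.1) hri
    have h2 : x.2.1 = β1 := congrArg (fun z : E3 => z.2.1) hri
    have h3 : gIm x = 0 := congrArg (fun z : E3 => z.2.2) hri
    have hwpos : 0 < w := by rw [hw]; exact inv_pos.2 hW.2
    have hJx : Jc x = Iint β 1 := Jc_eq x β (fun t => by rw [hβ t, ← h1, ← h2, hβh])
    have hJreal : Jc x = ((Jc x).re : ℂ) := Complex.ext (by simp) (by simpa [gIm] using h3)
    have hIw : Iint β 1 = (w:ℂ)⁻¹ := by
      rw [← hJx, hJreal, hw]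
      push_cast
      rw [inv_inv]
    refine ⟨hwpos, hIw, ?_, ?_, ?_⟩
    · intro q hq
      have hβc : Continuous β := by
        rw [funext hβ]
        exact ((continuous_const.mul lag0_cont).add (continuous_const.mul lagH_cont)).add
          (continuous_const.mul lag1_cont)
      have hic : Continuous fun s : ℝ => Complex.exp (Complex.I * (β s : ℂ)) :=
        Complex.continuous_exp.comp
          (continuous_const.mul (Complex.continuous_ofReal.comp hβc))
      refine ⟨?_, ?_, ?_⟩
      · rw [hq 0]
        show (w:ℂ) * Iint β 0 = 0
        rw [Iint, intervalIntegral.integral_same, mul_zero]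
      · rw [hq 1, hIw]
        exact mul_inv_cancel₀ (by exact_mod_cast ne_of_gt hwpos)
      · intro t
        have hD : HasDerivAt (fun t => Iint β t) (Complex.exp (Complex.I * (β t : ℂ))) t :=
          intervalIntegral.integral_hasDerivAt_right (hic.intervalIntegrable _ _)
            (hic.stronglyMeasurableAtFilter _ _) hic.continuousAt
        exact (hD.const_mul (w:ℂ)).congr_of_eventuallyEq (Filter.Eventually.of_forall hq)
    · rw [hβ 0]; unfold lag0 lagHalf lag1; norm_num
    · rw [hβ 1]; unfold lag0 lagHalf lag1; norm_num
end

section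
/- Let p0, p1 ∈ ℂ with d := p1 − p0 ≠ 0 and α0, α1 ∈ ℝ. Set β_j := α_j − arg d for j ∈ {0,1}, β := β0·ℓ²_0 + f̃(β0,β1)·ℓ²_{1/2} + β1·ℓ²_1, and assume I(β) ≠ 0; define the angle defect δ := arg I(β) and the curve p(t) := p0 + (d / I(β))·I(β,t) for t ∈ [0,1]. Then p(0) = p0, p(1) = p1, and the tangent angle of p at the endpoints satisfies arg p′(0) = α0 − δ and arg p′(1) = α1 − δ modulo 2π; that is, p is a clothoid interpolating the point data whose boundary tangent angles differ from the prescribed values exactly by the angle defect δ. -/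
/-! By the fundamental theorem of calculus `p' = (d / I(β)) · exp(iβ)`, and the quadratic
Lagrange basis interpolates, so `β(0) = β₀` and `β(1) = β₁`. Arguments add modulo `2π`,
hence `arg p'(j) ≡ arg d - arg I(β) + β_j = α_j - δ`. -/

open scoped Real

/-- The explicit cubic approximation of the exact middle-angle function of clothoid
two-point Hermite interpolation. -/
noncomputable def ftilde (b0 b1 : ℝ) : ℝ :=
  (b0 + b1) * ((b0 ^ 2 + b1 ^ 2) / 68 - b0 * b1 / 46 - 1 / 4)

open Complex

theorem continuous_lagrange_blend (b0 m b1 : ℝ) :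
    Continuous fun t => b0 * lag0 t + m * lagHalf t + b1 * lag1 t := by
  unfold lag0 lagHalf lag1
  fun_prop

theorem lagrange_blend_zero (b0 m b1 : ℝ) : b0 * lag0 0 + m * lagHalf 0 + b1 * lag1 0 = b0 := by
  norm_num [lag0, lagHalf, lag1]

theorem lagrange_blend_one (b0 m b1 : ℝ) : b0 * lag0 1 + m * lagHalf 1 + b1 * lag1 1 = b1 := by
  norm_num [lag0, lagHalf, lag1]

@[simp]
theorem Iint_zero (β : ℝ → ℝ) : Iint β 0 = 0 :=
  intervalIntegral.integral_same

theorem hasDerivAt_Iint {β : ℝ → ℝ} (hβ : Continuous β) (t : ℝ) :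
    HasDerivAt (Iint β) (exp (I * β t)) t := by
  have h : Continuous fun s : ℝ => exp (I * β s) := by fun_prop
  exact intervalIntegral.integral_hasDerivAt_right (h.intervalIntegrable _ _)
    h.stronglyMeasurable.stronglyMeasurableAtFilter h.continuousAt

theorem arg_exp_I_mul_coe_angle (b : ℝ) : ((exp (I * b)).arg : Real.Angle) = b := by
  rw [arg_exp, Real.Angle.coe_toIocMod]
  simp

theorem exists_arg_div_mul_exp_eq {d w : ℂ} (hd : d ≠ 0) (hw : w ≠ 0) (α : ℝ) :
    ∃ k : ℤ, (d / w * exp (I * ↑(α - d.arg))).arg = α - w.arg + 2 * π * k := by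
  obtain ⟨k, hk⟩ : ∃ k : ℤ, (d / w * exp (I * ↑(α - d.arg))).arg - (α - w.arg) = 2 * π * k := by
    rw [← Real.Angle.angle_eq_iff_two_pi_dvd_sub, arg_mul_coe_angle (div_ne_zero hd hw)
      (exp_ne_zero _), arg_div_coe_angle hd hw, arg_exp_I_mul_coe_angle]
    simp only [Real.Angle.coe_sub]
    abel
  exact ⟨k, by linarith⟩

/-- The approximate clothoid `p(t) = p₀ + (d / I(β))·I(β,t)` built with
the middle angle `f̃(β₀,β₁)` interpolates the point data, and its boundary tangent angles
differ from the prescribed angles `α₀, α₁` exactly by the angle defect `δ = arg I(β)`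
(modulo `2π`). -/
theorem approximate_clothoid_interpolation
    (p0 p1 : ℂ) (hd : p1 - p0 ≠ 0) (α0 α1 : ℝ) (β0 β1 : ℝ)
    (hβ0 : β0 = α0 - (p1 - p0).arg) (hβ1 : β1 = α1 - (p1 - p0).arg)
    (β : ℝ → ℝ) (hβ : ∀ t, β t = β0 * lag0 t + ftilde β0 β1 * lagHalf t + β1 * lag1 t)
    (hI : Iint β 1 ≠ 0)
    (p : ℝ → ℂ) (hp : ∀ t, p t = p0 + ((p1 - p0) / Iint β 1) * Iint β t) :
    p 0 = p0 ∧ p 1 = p1 ∧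
    (∀ t : ℝ, HasDerivAt p ((p1 - p0) / Iint β 1 * Complex.exp (Complex.I * (β t : ℂ))) t) ∧
    (∃ k : ℤ, ((p1 - p0) / Iint β 1 * Complex.exp (Complex.I * (β 0 : ℂ))).arg
        = α0 - (Iint β 1).arg + 2 * π * k) ∧
    (∃ k : ℤ, ((p1 - p0) / Iint β 1 * Complex.exp (Complex.I * (β 1 : ℂ))).arg
        = α1 - (Iint β 1).arg + 2 * π * k) := by
  obtain rfl : β = fun t => β0 * lag0 t + ftilde β0 β1 * lagHalf t + β1 * lag1 t := funext hβ
  obtain rfl : p = fun t => p0 + ((p1 - p0) / Iint _ 1) * Iint _ t := funext hp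
  refine ⟨by simp, by field_simp; ring, fun t => ?_, ?_, ?_⟩
  · exact ((hasDerivAt_Iint (continuous_lagrange_blend _ _ _) t).const_mul _).const_add p0
  · simpa only [lagrange_blend_zero, hβ0] using exists_arg_div_mul_exp_eq hd hI α0
  · simpa only [lagrange_blend_one, hβ1] using exists_arg_div_mul_exp_eq hd hI α1
end

section
/- Let β0 ∈ ℝ with |β0| < π and define β(t) := β0·(1−2t) for t ∈ [0,1]. Then β = β0·ℓ²_0 + 0·ℓ²_{1/2} + (−β0)·ℓ²_1 pointwise on [0,1], and I(β) = sin(β0)/β0 if β0 ≠ 0 (and I(β) = 1 if β0 = 0); in particular I(β) is real and positive, so the angle defect arg I(β) vanishes. Since also f̃(β0,−β0) = 0, the approximation f̃ is exact for antisymmetric boundary angles (β0, −β0), whose solution is a circular arc or straight line segment. -/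
open scoped Real

/-- For antisymmetric boundary angles `(β₀, −β₀)` with `|β₀| < π`, the
angle function `β(t) = β₀(1−2t)` coincides with `β₀·ℓ²₀ + 0·ℓ²_{1/2} + (−β₀)·ℓ²₁`,
`I(β) = sin β₀ / β₀` (`= 1` for `β₀ = 0`) is real and positive, so the angle defect
vanishes; moreover `f̃(β₀,−β₀) = 0`, so the approximation is exact (circular arc or
straight line segment). -/
theorem antisymmetric_case_exact
    (β0 : ℝ) (hβ0 : |β0| < π) (β : ℝ → ℝ)
    (hβ : ∀ t, β t = β0 * (1 - 2 * t)) :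
    (∀ t ∈ Set.Icc (0:ℝ) 1, β t = β0 * lag0 t + 0 * lagHalf t + (-β0) * lag1 t) ∧
    (β0 ≠ 0 → Iint β 1 = ((Real.sin β0 / β0 : ℝ) : ℂ)) ∧
    (β0 = 0 → Iint β 1 = 1) ∧
    (∃ r : ℝ, 0 < r ∧ Iint β 1 = (r : ℂ)) ∧
    (Iint β 1).arg = 0 ∧
    ftilde β0 (-β0) = 0 := by
  constructor
  · intro t ht
    rw [hβ]
    unfold lag0 lagHalf lag1
    ring
  have hmain : β0 ≠ 0 → Iint β 1 = ((Real.sin β0 / β0 : ℝ) : ℂ) := by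
    intro h0
    have h0c : (β0 : ℂ) ≠ 0 := by exact_mod_cast h0
    have hc : (Complex.I * (-2 * β0) : ℂ) ≠ 0 := by
      simp [Complex.I_ne_zero, h0c]
    have heq : ∀ s : ℝ, Complex.exp (Complex.I * ((β s : ℝ) : ℂ)) =
        Complex.exp (Complex.I * β0) * Complex.exp ((Complex.I * (-2 * β0)) * s) := by
      intro s
      rw [← Complex.exp_add, hβ s]
      congr 1
      push_cast
      ring
    unfold Iint
    simp_rw [heq]
    rw [intervalIntegral.integral_const_mul, integral_exp_mul_complex hc]
    have key : Complex.exp (Complex.I * β0) *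
        (Complex.exp (Complex.I * (-2 * β0) * 1) - Complex.exp (Complex.I * (-2 * β0) * 0)) =
        Complex.exp (-(Complex.I * β0)) - Complex.exp (Complex.I * β0) := by
      rw [mul_one, mul_zero, Complex.exp_zero, mul_sub, mul_one, ← Complex.exp_add]
      congr 2
      ring
    push_cast
    rw [mul_div_assoc', key]
    rw [Complex.sin]
    field_simp
    ring_nf
    rw [Complex.I_sq]
    ring
  have hzero : β0 = 0 → Iint β 1 = 1 := by
    intro h0
    unfold Iint
    simp [hβ, h0]
  refine ⟨hmain, hzero, ?_, ?_, ?_⟩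
  · rcases eq_or_ne β0 0 with h0 | h0
    · exact ⟨1, one_pos, by simpa using hzero h0⟩
    · refine ⟨Real.sin β0 / β0, ?_, hmain h0⟩
      rcases h0.lt_or_gt with hneg | hpos
      · have hs : Real.sin β0 < 0 := by
          apply Real.sin_neg_of_neg_of_neg_pi_lt hneg
          rw [abs_lt] at hβ0; linarith [hβ0.1]
        exact div_pos_of_neg_of_neg hs hneg
      · have hs : 0 < Real.sin β0 := by
          apply Real.sin_pos_of_pos_of_lt_pi hpos
          rw [abs_lt] at hβ0; linarith [hβ0.2]
        exact div_pos hs hpos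
  · rcases eq_or_ne β0 0 with h0 | h0
    · rw [hzero h0]; simp
    · rw [hmain h0]
      apply Complex.arg_ofReal_of_nonneg
      rcases h0.lt_or_gt with hneg | hpos
      · have hs : Real.sin β0 < 0 := by
          apply Real.sin_neg_of_neg_of_neg_pi_lt hneg
          rw [abs_lt] at hβ0; linarith [hβ0.1]
        exact (div_pos_of_neg_of_neg hs hneg).le
      · have hs : 0 < Real.sin β0 := by
          apply Real.sin_pos_of_pos_of_lt_pi hpos
          rw [abs_lt] at hβ0; linarith [hβ0.2]
        exact (div_pos hs hpos).le
  · unfold ftilde; ring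
end

section
/- Let m ∈ ℂ, r > 0, and α0, α1 ∈ ℝ with 0 < α1 − α0 < 2π. Set p_j := m − i·r·exp(i·α_j) for j ∈ {0,1}, d := p1 − p0, and β0 := (α0 − α1)/2, β(t) := β0·(1−2t). Then d = 2r·sin((α1−α0)/2)·exp(i·(α0+α1)/2) ≠ 0, and the curve p(t) := p0 + d·I(β,t)/I(β) satisfies p(t) = m − i·r·exp(i·((1−t)·α0 + t·α1)) for all t ∈ [0,1]; that is, the interpolating construction with the antisymmetric boundary angles (β0, −β0) exactly parametrizes the circular arc on the circle of center m and radius r from p0 to p1. -/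
open scoped Real

/-!
With `δ = (α₁-α₀)/2` and `μ = (α₀+α₁)/2`, the arc angle `(1-t)α₀ + tα₁` equals `μ + β(t)`, so
the arc `m - i r e^{i(μ+β(t))}` has velocity `2δ r e^{iμ} e^{iβ(t)}` and is therefore
`p₀ + 2δ r e^{iμ} I(β,t)`. At `t = 1` this identifies the constant as `(p₁-p₀)/I(β)`, which is
legitimate because the chord `p₁ - p₀ = 2 r sin δ e^{iμ}` is nonzero for `0 < δ < π`.
-/

open Complex

lemma Iint_affine {a b : ℝ} (hb : b ≠ 0) (t : ℝ) :
    Iint (fun s => a + b * s) t = (exp (I * ↑(a + b * t)) - exp (I * a)) / (I * b) := by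
  have hIb : I * (b : ℂ) ≠ 0 := mul_ne_zero I_ne_zero (ofReal_ne_zero.mpr hb)
  have harg : ∀ s : ℝ, I * ((a + b * s : ℝ) : ℂ) = I * a + (I * b) * s := fun s => by
    push_cast; ring
  simp only [Iint, harg, exp_add, intervalIntegral.integral_const_mul,
    integral_exp_mul_complex hIb, ofReal_zero, mul_zero, exp_zero]
  field_simp

lemma circle_eq_add_mul_Iint (m : ℂ) (r μ a : ℝ) {b : ℝ} (hb : b ≠ 0) (t : ℝ) :
    m - I * r * exp (I * ↑(μ + (a + b * t))) =
      m - I * r * exp (I * ↑(μ + a)) + r * b * exp (I * μ) * Iint (fun s => a + b * s) t := by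
  have hb' : (b : ℂ) ≠ 0 := ofReal_ne_zero.mpr hb
  rw [Iint_affine hb]
  push_cast
  simp only [mul_add, exp_add]
  field_simp
  linear_combination (r : ℂ) * exp (I * μ) * exp (I * a) * (1 - exp (I * b * t)) * I_sq

lemma exp_I_mul_sub_exp_neg_I_mul (z : ℂ) : exp (I * z) - exp (-(I * z)) = 2 * I * sin z := by
  have h := two_sin z
  rw [neg_mul, mul_comm z I] at h
  linear_combination -I * h + (exp (I * z) - exp (-(I * z))) * I_sq

lemma circle_chord (m : ℂ) (r μ δ : ℝ) :
    (m - I * r * exp (I * ↑(μ + δ))) - (m - I * r * exp (I * ↑(μ - δ))) =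
      ↑(2 * r * Real.sin δ) * exp (I * μ) := by
  push_cast
  simp only [sub_eq_add_neg, mul_add, mul_neg, exp_add]
  linear_combination (-I * r * exp (I * μ)) * exp_I_mul_sub_exp_neg_I_mul δ
    - 2 * r * sin δ * exp (I * μ) * I_sq

/-- circle reproduction. For Hermite data sampled from the circle of
center `m` and radius `r` at tangent angles `α₀ < α₁ < α₀ + 2π`, the interpolating
construction with the antisymmetric boundary angles `(β₀, −β₀)`, `β₀ = (α₀−α₁)/2`,
exactly parametrizes the circular arc from `p₀` to `p₁`. -/
theorem circle_reproduction
    (m : ℂ) (r : ℝ) (hr : 0 < r) (α0 α1 : ℝ)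
    (h01 : 0 < α1 - α0) (h2π : α1 - α0 < 2 * π)
    (p0 p1 : ℂ)
    (hp0 : p0 = m - Complex.I * (r : ℂ) * Complex.exp (Complex.I * (α0 : ℂ)))
    (hp1 : p1 = m - Complex.I * (r : ℂ) * Complex.exp (Complex.I * (α1 : ℂ)))
    (β : ℝ → ℝ) (hβ : ∀ t, β t = ((α0 - α1) / 2) * (1 - 2 * t))
    (p : ℝ → ℂ) (hp : ∀ t, p t = p0 + (p1 - p0) * Iint β t / Iint β 1) :
    p1 - p0 = ((2 * r * Real.sin ((α1 - α0) / 2) : ℝ) : ℂ)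
        * Complex.exp (Complex.I * (((α0 + α1) / 2 : ℝ) : ℂ)) ∧
    p1 - p0 ≠ 0 ∧
    ∀ t ∈ Set.Icc (0:ℝ) 1,
      p t = m - Complex.I * (r : ℂ)
          * Complex.exp (Complex.I * (((1 - t) * α0 + t * α1 : ℝ) : ℂ)) := by
  set δ := (α1 - α0) / 2 with hδ
  set μ := (α0 + α1) / 2 with hμ
  have hβ_affine : β = fun s => -δ + 2 * δ * s := funext fun s => by rw [hβ]; ring
  have hδ_ne : 2 * δ ≠ 0 := by positivity
  have arc : ∀ t : ℝ, m - I * r * exp (I * ↑((1 - t) * α0 + t * α1)) =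
      p0 + r * ↑(2 * δ) * exp (I * μ) * Iint β t := fun t => by
    rw [hβ_affine, hp0, show (1 - t) * α0 + t * α1 = μ + (-δ + 2 * δ * t) by rw [hδ, hμ]; ring,
      show α0 = μ + -δ by rw [hδ, hμ]; ring]
    exact circle_eq_add_mul_Iint m r μ (-δ) hδ_ne t
  have chord : p1 - p0 = ↑(2 * r * Real.sin δ) * exp (I * μ) := by
    rw [hp0, hp1, ← circle_chord m r μ δ, show μ + δ = α1 by rw [hδ, hμ]; ring,
      show μ - δ = α0 by rw [hδ, hμ]; ring]
  have chord_ne : p1 - p0 ≠ 0 := by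
    have : 0 < Real.sin δ := Real.sin_pos_of_pos_of_lt_pi (by linarith) (by linarith)
    rw [chord]
    exact mul_ne_zero (ofReal_ne_zero.mpr (by positivity)) (exp_ne_zero _)
  have chord_Iint : p1 - p0 = r * ↑(2 * δ) * exp (I * μ) * Iint β 1 := by
    have arc_one := arc 1
    simp only [sub_self, zero_mul, one_mul, zero_add] at arc_one
    rw [hp1, arc_one, add_sub_cancel_left]
  refine ⟨chord, chord_ne, fun t _ => ?_⟩
  have hI1 : Iint β 1 ≠ 0 := right_ne_zero_of_mul (chord_Iint ▸ chord_ne)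
  rw [hp t, arc t, chord_Iint]
  field_simp
end

section
/- Define, for (β0,β1) ∈ B := [−π/2, π/2]², the function β := β0·ℓ²_0 + f̃(β0,β1)·ℓ²_{1/2} + β1·ℓ²_1 and the angle defect δ(β0,β1) := arg I(β) (well defined since I(β) ≠ 0 on B). Then there exist constants c1 > 0 and c2 > 0 such that |δ(β0,β1)| ≤ min{c1, c2·|β0+β1|·(β0² + β1²)} for all (β0,β1) ∈ B. -/
open scoped Real

/-- The angle function built from the boundary angles and the approximate middle angle. -/
noncomputable def βfun (b0 b1 : ℝ) (t : ℝ) : ℝ :=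
  b0 * lag0 t + ftilde b0 b1 * lagHalf t + b1 * lag1 t

/-!
Write `β = S·e + D·o` with `S = β₀ + β₁`, `D = β₀ − β₁`, where `o(t) = (1 − 2t)/2` is odd and
`e(t) = (2t − 1)²/2 + g·ℓ²_{1/2}(t)` is even under `t ↦ 1 − t`, and `f̃ = S·g`.
On the square `|S| + |D| ≤ π` and `|e|, |o| ≤ 1/2`, so `|β| ≤ π/2` on `[0,1]` and `|β| < 1` on
`[1/4,3/4]`; hence `Re I(β) = ∫ cos β ≥ 1/4`.
Symmetrizing under `t ↦ 1 − t` gives `Im I(β) = ∫ sin(S e) cos(D o)`, which is `S ∫ e` up to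
`O(|S|(S² + D²))`, and the constant `−1/4` in `f̃` makes `∫ e = (β₀² + β₁²)/102 − β₀β₁/69`
quadratic. Finally `|arg I| ≤ |Im I| / Re I`, so `c₁ = π`, `c₂ = 1` work.
-/

open Real Set intervalIntegral

lemma Real.abs_le_abs_tan {x : ℝ} (hx : |x| < π / 2) : |x| ≤ |tan x| := by
  rcases le_total 0 x with h | h
  · rw [abs_of_nonneg h] at hx ⊢
    exact (le_tan h hx).trans (le_abs_self _)
  · rw [abs_of_nonpos h] at hx ⊢
    have := le_tan (neg_nonneg.2 h) hx
    rw [tan_neg] at this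
    exact this.trans (neg_le_abs _)

lemma Complex.abs_arg_le_abs_im_div_re {z : ℂ} (hz : 0 < z.re) :
    |z.arg| ≤ |z.im| / z.re := by
  have harg : |z.arg| < π / 2 := Complex.abs_arg_lt_pi_div_two_iff.2 (Or.inl hz)
  calc |z.arg| ≤ |Real.tan z.arg| := Real.abs_le_abs_tan harg
    _ = |z.im| / z.re := by rw [Complex.tan_arg, abs_div, abs_of_pos hz]

lemma Real.abs_sin_mul_cos_sub_le (x y : ℝ) :
    |sin x * cos y - x| ≤ |x| ^ 3 / 6 + |x| * (y ^ 2 / 2) := by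
  have hcos : |cos y - 1| ≤ y ^ 2 / 2 := by
    rw [abs_le]
    constructor <;> linarith [one_sub_sq_div_two_le_cos (x := y), cos_le_one y, sq_nonneg y]
  calc |sin x * cos y - x| = |(sin x - x) * cos y + x * (cos y - 1)| := by ring_nf
    _ ≤ |sin x - x| * |cos y| + |x| * |cos y - 1| := by
        rw [← abs_mul, ← abs_mul]; exact abs_add_le _ _
    _ ≤ |x| ^ 3 / 6 * 1 + |x| * (y ^ 2 / 2) := by
        gcongr
        · rw [abs_sub_comm]; exact abs_sub_sin_le x
        · exact abs_cos_le_one y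
    _ = |x| ^ 3 / 6 + |x| * (y ^ 2 / 2) := by ring

lemma abs_add_add_abs_sub_le {a b r : ℝ} (ha : |a| ≤ r) (hb : |b| ≤ r) :
    |a + b| + |a - b| ≤ 2 * r := by
  rw [abs_le] at ha hb
  rcases abs_cases (a + b) with ⟨h, _⟩ | ⟨h, _⟩ <;>
  rcases abs_cases (a - b) with ⟨h', _⟩ | ⟨h', _⟩ <;> linarith

lemma mul_le_integral_of_nonneg_of_le {f : ℝ → ℝ} {a b c d m : ℝ} (hf : Continuous f)
    (hac : a ≤ c) (hcd : c ≤ d) (hdb : d ≤ b) (hf0 : ∀ t ∈ Icc a b, 0 ≤ f t)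
    (hm : ∀ t ∈ Icc c d, m ≤ f t) :
    m * (d - c) ≤ ∫ t in a..b, f t := by
  calc m * (d - c) = ∫ _ in c..d, m := by rw [integral_const, smul_eq_mul, mul_comm]
    _ ≤ ∫ t in c..d, f t := integral_mono_on hcd intervalIntegrable_const
        (hf.intervalIntegrable c d) hm
    _ ≤ ∫ t in a..b, f t := integral_mono_interval hac hcd hdb
        (MeasureTheory.ae_restrict_of_forall_mem measurableSet_Ioc
          fun t ht => hf0 t (Ioc_subset_Icc_self ht))
        (hf.intervalIntegrable a b)

lemma integral_sin_add_eq_integral_sin_mul_cos {u v : ℝ → ℝ} {a b : ℝ}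
    (hu : Continuous u) (hv : Continuous v)
    (hu_symm : ∀ t, u (a + b - t) = u t) (hv_symm : ∀ t, v (a + b - t) = -v t) :
    ∫ t in a..b, sin (u t + v t) = ∫ t in a..b, sin (u t) * cos (v t) := by
  have hreflect : ∫ t in a..b, sin (u t + v t) = ∫ t in a..b, sin (u t - v t) := by
    have h := integral_comp_sub_left (fun t => sin (u t + v t)) (a + b) (a := a) (b := b)
    simp only [add_sub_cancel_right, add_sub_cancel_left, hu_symm, hv_symm] at h
    simp only [← h, sub_eq_add_neg]
  have hsum : ∫ t in a..b, (sin (u t + v t) + sin (u t - v t))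
      = ∫ t in a..b, 2 * (sin (u t) * cos (v t)) := by
    congr 1; ext t; rw [sin_add, sin_sub]; ring
  rw [integral_add ((by fun_prop : Continuous _).intervalIntegrable a b)
    ((by fun_prop : Continuous _).intervalIntegrable a b), integral_const_mul, ← hreflect] at hsum
  linarith

lemma Iint_re {β : ℝ → ℝ} (hβ : Continuous β) (t : ℝ) :
    (Iint β t).re = ∫ s in (0:ℝ)..t, cos (β s) := by
  rw [Iint, ← RCLike.re_eq_complex_re, ← intervalIntegral_re
    ((by fun_prop : Continuous fun s => Complex.exp (Complex.I * (β s : ℂ))).intervalIntegrable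
      0 t)]
  simp_rw [mul_comm Complex.I, RCLike.re_eq_complex_re, Complex.exp_ofReal_mul_I_re]

lemma Iint_im {β : ℝ → ℝ} (hβ : Continuous β) (t : ℝ) :
    (Iint β t).im = ∫ s in (0:ℝ)..t, sin (β s) := by
  rw [Iint, ← RCLike.im_eq_complex_im, ← intervalIntegral_im
    ((by fun_prop : Continuous fun s => Complex.exp (Complex.I * (β s : ℂ))).intervalIntegrable
      0 t)]
  simp_rw [mul_comm Complex.I, RCLike.im_eq_complex_im, Complex.exp_ofReal_mul_I_im]

noncomputable def midAngleFactor (b0 b1 : ℝ) : ℝ := (b0 ^ 2 + b1 ^ 2) / 68 - b0 * b1 / 46 - 1 / 4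

noncomputable def oddShape (t : ℝ) : ℝ := (1 - 2 * t) / 2

noncomputable def evenShape (g t : ℝ) : ℝ := (2 * t - 1) ^ 2 / 2 + g * lagHalf t

lemma βfun_eq (b0 b1 t : ℝ) :
    βfun b0 b1 t = (b0 + b1) * evenShape (midAngleFactor b0 b1) t + (b0 - b1) * oddShape t := by
  simp only [βfun, ftilde, lag0, lag1, evenShape, midAngleFactor, oddShape]; ring

@[fun_prop] lemma continuous_oddShape : Continuous oddShape := by
  unfold oddShape; fun_prop

@[fun_prop] lemma continuous_evenShape (g : ℝ) : Continuous (evenShape g) := by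
  unfold evenShape lagHalf; fun_prop

@[fun_prop] lemma continuous_βfun (b0 b1 : ℝ) : Continuous (βfun b0 b1) := by
  unfold βfun lag0 lagHalf lag1; fun_prop

lemma oddShape_one_sub (t : ℝ) : oddShape (1 - t) = -oddShape t := by
  unfold oddShape; ring

lemma evenShape_one_sub (g t : ℝ) : evenShape g (1 - t) = evenShape g t := by
  unfold evenShape lagHalf; ring

lemma abs_oddShape_le {t : ℝ} (ht : t ∈ Icc (0:ℝ) 1) : |oddShape t| ≤ 1 / 2 := by
  unfold oddShape; rw [abs_le]; constructor <;> linarith [ht.1, ht.2]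

lemma abs_oddShape_le_of_mem_middle {t : ℝ} (ht : t ∈ Icc (1/4 : ℝ) (3/4)) :
    |oddShape t| ≤ 1 / 4 := by
  unfold oddShape; rw [abs_le]; constructor <;> linarith [ht.1, ht.2]

lemma evenShape_mem_Icc {g t : ℝ} (hg : g ≤ 0) (ht : t ∈ Icc (0:ℝ) 1) :
    evenShape g t ∈ Icc g (1 / 2) := by
  have hl : 0 ≤ t * (1 - t) := mul_nonneg ht.1 (sub_nonneg.2 ht.2)
  unfold evenShape lagHalf
  constructor <;> nlinarith [sq_nonneg (2 * t - 1), mul_nonpos_of_nonpos_of_nonneg hg hl]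

lemma evenShape_le_of_mem_middle {g t : ℝ} (hg : g ≤ 0) (ht : t ∈ Icc (1/4 : ℝ) (3/4)) :
    evenShape g t ≤ 1 / 8 := by
  have hl : 0 ≤ t * (1 - t) := mul_nonneg (by linarith [ht.1]) (by linarith [ht.2])
  have hmid : 0 ≤ (t - 1 / 4) * (3 / 4 - t) := mul_nonneg (by linarith [ht.1]) (by linarith [ht.2])
  unfold evenShape lagHalf
  nlinarith [mul_nonpos_of_nonpos_of_nonneg hg hl]

lemma integral_evenShape (g : ℝ) : ∫ t in (0:ℝ)..1, evenShape g t = 2 * g / 3 + 1 / 6 := by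
  have h : ∀ t, evenShape g t = (2 - 4 * g) * t ^ 2 + (4 * g - 2) * t + 1 / 2 := by
    intro t; unfold evenShape lagHalf; ring
  simp_rw [h]
  rw [integral_add ((by fun_prop : Continuous _).intervalIntegrable 0 1) intervalIntegrable_const,
    integral_add ((by fun_prop : Continuous _).intervalIntegrable 0 1)
      ((by fun_prop : Continuous _).intervalIntegrable 0 1),
    integral_const_mul, integral_const_mul, integral_pow, integral_id, integral_const]
  norm_num
  ring

lemma abs_sin_mul_cos_sub_le_of_abs_le {S D e o : ℝ} (he : |e| ≤ 1 / 2) (ho : |o| ≤ 1 / 2) :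
    |sin (S * e) * cos (D * o) - S * e| ≤ |S| * (S ^ 2 + D ^ 2) / 16 := by
  calc |sin (S * e) * cos (D * o) - S * e|
      ≤ |S * e| ^ 3 / 6 + |S * e| * ((D * o) ^ 2 / 2) := abs_sin_mul_cos_sub_le _ _
    _ = (|S| * |e|) ^ 3 / 6 + |S| * |e| * (D ^ 2 * |o| ^ 2 / 2) := by
        rw [abs_mul, mul_pow, sq_abs, mul_pow D o]
    _ ≤ (|S| * (1 / 2)) ^ 3 / 6 + |S| * (1 / 2) * (D ^ 2 * (1 / 2) ^ 2 / 2) := by gcongr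
    _ ≤ |S| * (S ^ 2 + D ^ 2) / 16 := by
        have hS : |S| ^ 3 = |S| * S ^ 2 := by rw [pow_succ', sq_abs]
        nlinarith [abs_nonneg S, mul_nonneg (abs_nonneg S) (sq_nonneg S)]

lemma abs_integral_evenShape_midAngleFactor_le (b0 b1 : ℝ) :
    |∫ t in (0:ℝ)..1, evenShape (midAngleFactor b0 b1) t| ≤ (b0 ^ 2 + b1 ^ 2) / 50 := by
  rw [integral_evenShape, midAngleFactor, abs_le]
  constructor <;> nlinarith [sq_nonneg (b0 - b1), sq_nonneg (b0 + b1)]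

section Square

variable {b0 b1 : ℝ} (h0 : |b0| ≤ π / 2) (h1 : |b1| ≤ π / 2)
include h0 h1

lemma midAngleFactor_mem_Icc : midAngleFactor b0 b1 ∈ Icc (-(31 / 100)) 0 := by
  have hq : b0 ^ 2 + b1 ^ 2 ≤ 497 / 100 := by
    have := pi_lt_d2
    nlinarith [sq_abs b0, sq_abs b1, abs_nonneg b0, abs_nonneg b1]
  unfold midAngleFactor
  constructor <;> nlinarith [sq_nonneg (b0 - b1), sq_nonneg (b0 + b1)]

lemma abs_βfun_le {t M : ℝ} (he : |evenShape (midAngleFactor b0 b1) t| ≤ M)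
    (ho : |oddShape t| ≤ M) : |βfun b0 b1 t| ≤ π * M := by
  have hM : 0 ≤ M := (abs_nonneg _).trans ho
  have hSD : |b0 + b1| + |b0 - b1| ≤ π := by
    linarith [abs_add_add_abs_sub_le h0 h1]
  rw [βfun_eq]
  calc _ ≤ |b0 + b1| * |evenShape (midAngleFactor b0 b1) t| + |b0 - b1| * |oddShape t| := by
        rw [← abs_mul, ← abs_mul]; exact abs_add_le _ _
    _ ≤ |b0 + b1| * M + |b0 - b1| * M := by gcongr
    _ ≤ π * M := by nlinarith

lemma quarter_le_integral_cos_βfun : 1 / 4 ≤ ∫ t in (0:ℝ)..1, cos (βfun b0 b1 t) := by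
  obtain ⟨hg_lo, hg_hi⟩ := midAngleFactor_mem_Icc h0 h1
  have hnonneg : ∀ t ∈ Icc (0:ℝ) 1, 0 ≤ cos (βfun b0 b1 t) := by
    intro t ht
    have he := evenShape_mem_Icc hg_hi ht
    have hβ := abs_βfun_le h0 h1 (M := 1 / 2) (abs_le.2 ⟨by linarith [he.1], he.2⟩)
      (abs_oddShape_le ht)
    have hβ' : |βfun b0 b1 t| ≤ π / 2 := by linarith
    exact cos_nonneg_of_mem_Icc (abs_le.1 hβ')
  have hmiddle : ∀ t ∈ Icc (1/4 : ℝ) (3/4), 1 / 2 ≤ cos (βfun b0 b1 t) := by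
    intro t ht
    have he := evenShape_mem_Icc (t := t) hg_hi ⟨by linarith [ht.1], by linarith [ht.2]⟩
    have hβ := abs_βfun_le h0 h1 (M := 31 / 100)
      (abs_le.2 ⟨by linarith [he.1], by linarith [evenShape_le_of_mem_middle hg_hi ht]⟩)
      ((abs_oddShape_le_of_mem_middle ht).trans (by norm_num))
    have hsq : βfun b0 b1 t ^ 2 ≤ (π * (31 / 100)) ^ 2 := by
      rw [← sq_abs]; gcongr
    nlinarith [one_sub_sq_div_two_le_cos (x := βfun b0 b1 t), pi_lt_d2, pi_pos]
  have := mul_le_integral_of_nonneg_of_le (f := fun t => cos (βfun b0 b1 t)) (by fun_prop)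
    (by norm_num : (0:ℝ) ≤ 1 / 4) (by norm_num : (1 / 4 : ℝ) ≤ 3 / 4) (by norm_num : (3 / 4 : ℝ) ≤ 1)
    hnonneg hmiddle
  linarith

lemma abs_integral_sin_βfun_le :
    |∫ t in (0:ℝ)..1, sin (βfun b0 b1 t)| ≤ |b0 + b1| * (b0 ^ 2 + b1 ^ 2) / 5 := by
  set S := b0 + b1
  set D := b0 - b1
  set e := evenShape (midAngleFactor b0 b1)
  have hg := midAngleFactor_mem_Icc h0 h1
  have hsymm : ∫ t in (0:ℝ)..1, sin (βfun b0 b1 t)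
      = ∫ t in (0:ℝ)..1, sin (S * e t) * cos (D * oddShape t) := by
    simp_rw [βfun_eq]
    refine integral_sin_add_eq_integral_sin_mul_cos (by fun_prop) (by fun_prop)
      (fun t => ?_) (fun t => ?_)
    · rw [zero_add, evenShape_one_sub]
    · rw [zero_add, oddShape_one_sub, mul_neg]
  set J := ∫ t in (0:ℝ)..1, sin (S * e t) * cos (D * oddShape t)
  set E := ∫ t in (0:ℝ)..1, e t
  have hdev : |J - S * E| ≤ |S| * (S ^ 2 + D ^ 2) / 16 := by
    have hsub : ∫ t in (0:ℝ)..1, (sin (S * e t) * cos (D * oddShape t) - S * e t) = J - S * E := by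
      rw [integral_sub ((by fun_prop : Continuous _).intervalIntegrable 0 1)
        ((by fun_prop : Continuous _).intervalIntegrable 0 1), integral_const_mul]
    rw [← hsub]
    have := norm_integral_le_of_norm_le_const (a := 0) (b := 1) (C := |S| * (S ^ 2 + D ^ 2) / 16)
      (f := fun t => sin (S * e t) * cos (D * oddShape t) - S * e t) (fun t ht => by
        rw [uIoc_of_le zero_le_one] at ht
        have ht' : t ∈ Icc (0:ℝ) 1 := Ioc_subset_Icc_self ht
        have he := evenShape_mem_Icc hg.2 ht'
        exact abs_sin_mul_cos_sub_le_of_abs_le (abs_le.2 ⟨by linarith [he.1, hg.1], he.2⟩)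
          (abs_oddShape_le ht'))
    simpa using this
  have hmean : |S * E| ≤ |S| * ((b0 ^ 2 + b1 ^ 2) / 50) := by
    rw [abs_mul]; gcongr; exact abs_integral_evenShape_midAngleFactor_le b0 b1
  have hSD : S ^ 2 + D ^ 2 = 2 * (b0 ^ 2 + b1 ^ 2) := by ring
  rw [hsymm]
  calc |J| = |(J - S * E) + S * E| := by rw [sub_add_cancel]
    _ ≤ |J - S * E| + |S * E| := abs_add_le _ _
    _ ≤ |S| * (S ^ 2 + D ^ 2) / 16 + |S| * ((b0 ^ 2 + b1 ^ 2) / 50) := add_le_add hdev hmean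
    _ ≤ |S| * (b0 ^ 2 + b1 ^ 2) / 5 := by
        rw [hSD]; nlinarith [mul_nonneg (abs_nonneg S) (add_nonneg (sq_nonneg b0) (sq_nonneg b1))]

end Square

/-- bound on the angle defect. On `B = [−π/2,π/2]²` the integral
`I(β)` is nonzero and the angle defect `δ(β₀,β₁) = arg I(β)` satisfies
`|δ(β₀,β₁)| ≤ min{c₁, c₂·|β₀+β₁|·(β₀²+β₁²)}` for some constants `c₁, c₂ > 0`. -/
theorem angle_defect_bound :
    ∃ c1 > (0:ℝ), ∃ c2 > (0:ℝ), ∀ β0 β1 : ℝ,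
      β0 ∈ Set.Icc (-(π / 2)) (π / 2) → β1 ∈ Set.Icc (-(π / 2)) (π / 2) →
      Iint (βfun β0 β1) 1 ≠ 0 ∧
      |(Iint (βfun β0 β1) 1).arg| ≤ min c1 (c2 * |β0 + β1| * (β0 ^ 2 + β1 ^ 2)) := by
  refine ⟨π, pi_pos, 1, one_pos, fun β0 β1 hβ0 hβ1 => ?_⟩
  have h0 : |β0| ≤ π / 2 := abs_le.2 hβ0
  have h1 : |β1| ≤ π / 2 := abs_le.2 hβ1
  set z := Iint (βfun β0 β1) 1
  have hre : 1 / 4 ≤ z.re :=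
    Iint_re (continuous_βfun β0 β1) 1 ▸ quarter_le_integral_cos_βfun h0 h1
  have him : |z.im| ≤ |β0 + β1| * (β0 ^ 2 + β1 ^ 2) / 5 :=
    Iint_im (continuous_βfun β0 β1) 1 ▸ abs_integral_sin_βfun_le h0 h1
  refine ⟨fun hz => by norm_num [hz] at hre, le_min (Complex.abs_arg_le_pi z) ?_⟩
  calc |z.arg| ≤ |z.im| / z.re := Complex.abs_arg_le_abs_im_div_re (by linarith)
    _ ≤ (|β0 + β1| * (β0 ^ 2 + β1 ^ 2) / 5) / (1 / 4) := by gcongr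
    _ ≤ 1 * |β0 + β1| * (β0 ^ 2 + β1 ^ 2) := by
        nlinarith [mul_nonneg (abs_nonneg (β0 + β1)) (add_nonneg (sq_nonneg β0) (sq_nonneg β1))]
end

section
/- Define, for (β0,β1) ∈ B := [−π/2, π/2]², the function β := β0·ℓ²_0 + f̃(β0,β1)·ℓ²_{1/2} + β1·ℓ²_1 and the angle defect δ(β0,β1) := arg I(β) (well defined since I(β) ≠ 0 on B). Then δ is symmetric and odd: δ(β1,β0) = δ(β0,β1) and δ(−β0,−β1) = −δ(β0,β1) for all (β0,β1) ∈ B. -/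
open scoped Real

/-- The angle defect `δ(β₀,β₁) := arg I(β₀·ℓ²₀ + f̃(β₀,β₁)·ℓ²_{1/2} + β₁·ℓ²₁)`. -/
noncomputable def angleDefect (b0 b1 : ℝ) : ℝ :=
  (Iint (fun t => b0 * lag0 t + ftilde b0 b1 * lagHalf t + b1 * lag1 t) 1).arg

private lemma ftilde_bound {b0 b1 : ℝ} (h0 : |b0| ≤ π / 2) (h1 : |b1| ≤ π / 2) :
    |ftilde b0 b1| ≤ π / 4 := by
  have hπ : 3 < π := Real.pi_gt_three
  have hπ' : π < 3.15 := Real.pi_lt_d2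
  rw [abs_le] at h0 h1
  have h0sq : b0 ^ 2 ≤ (π / 2) ^ 2 := by nlinarith [h0.1, h0.2]
  have h1sq : b1 ^ 2 ≤ (π / 2) ^ 2 := by nlinarith [h1.1, h1.2]
  rw [ftilde, abs_mul]
  have hsum : |b0 + b1| ≤ π := by
    rw [abs_le]; constructor <;> [linarith [h0.1, h1.1]; linarith [h0.2, h1.2]]
  have hq : |(b0 ^ 2 + b1 ^ 2) / 68 - b0 * b1 / 46 - 1 / 4| ≤ 1 / 4 := by
    rw [abs_le]
    constructor
    · nlinarith [sq_nonneg (b0 - b1), sq_nonneg (b0 + b1)]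
    · nlinarith [sq_nonneg (b0 - b1), sq_nonneg (b0 + b1)]
  calc |b0 + b1| * |(b0 ^ 2 + b1 ^ 2) / 68 - b0 * b1 / 46 - 1 / 4|
      ≤ π * (1 / 4) := mul_le_mul hsum hq (abs_nonneg _) (by linarith)
    _ = π / 4 := by ring

private lemma beta_abs_lt {b0 b1 F : ℝ} (h0 : |b0| ≤ π / 2) (h1 : |b1| ≤ π / 2)
    (hF : |F| ≤ π / 4) {t : ℝ} (ht : t ∈ Set.Ioo (0 : ℝ) 1) :
    |b0 * lag0 t + F * lagHalf t + b1 * lag1 t| < π / 2 := by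
  obtain ⟨ht0, ht1⟩ := ht
  have hπ : 0 < π := Real.pi_pos
  have key : |b0| * |lag0 t| + |F| * |lagHalf t| + |b1| * |lag1 t| < π / 2 := by
    have hh : |lagHalf t| = 4 * t * (1 - t) := by
      rw [lagHalf, abs_of_nonneg]; nlinarith
    rcases le_or_gt t (1 / 2) with h | h
    · have e0 : |lag0 t| = (t - 1) * (2 * t - 1) := by
        rw [lag0, abs_of_nonneg]; nlinarith
      have e1 : |lag1 t| = -(t * (2 * t - 1)) := by
        rw [lag1, abs_of_nonpos]; nlinarith
      rw [e0, e1, hh]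
      have A : |b0| * ((t - 1) * (2 * t - 1)) ≤ π / 2 * ((t - 1) * (2 * t - 1)) :=
        mul_le_mul_of_nonneg_right h0 (by nlinarith)
      have B : |F| * (4 * t * (1 - t)) ≤ π / 4 * (4 * t * (1 - t)) :=
        mul_le_mul_of_nonneg_right hF (by nlinarith)
      have C : |b1| * -(t * (2 * t - 1)) ≤ π / 2 * -(t * (2 * t - 1)) :=
        mul_le_mul_of_nonneg_right h1 (by nlinarith)
      nlinarith [mul_pos hπ (mul_pos ht0 ht0)]
    · have e0 : |lag0 t| = -((t - 1) * (2 * t - 1)) := by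
        rw [lag0, abs_of_nonpos]; nlinarith
      have e1 : |lag1 t| = t * (2 * t - 1) := by
        rw [lag1, abs_of_nonneg]; nlinarith
      rw [e0, e1, hh]
      have A : |b0| * -((t - 1) * (2 * t - 1)) ≤ π / 2 * -((t - 1) * (2 * t - 1)) :=
        mul_le_mul_of_nonneg_right h0 (by nlinarith)
      have B : |F| * (4 * t * (1 - t)) ≤ π / 4 * (4 * t * (1 - t)) :=
        mul_le_mul_of_nonneg_right hF (by nlinarith)
      have C : |b1| * (t * (2 * t - 1)) ≤ π / 2 * (t * (2 * t - 1)) :=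
        mul_le_mul_of_nonneg_right h1 (by nlinarith)
      nlinarith [mul_pos hπ (mul_pos (by linarith : (0:ℝ) < 1 - t) (by linarith : (0:ℝ) < 1 - t))]
  calc |b0 * lag0 t + F * lagHalf t + b1 * lag1 t|
      ≤ |b0 * lag0 t + F * lagHalf t| + |b1 * lag1 t| := abs_add_le _ _
    _ ≤ |b0 * lag0 t| + |F * lagHalf t| + |b1 * lag1 t| := by
        linarith [abs_add_le (b0 * lag0 t) (F * lagHalf t)]
    _ = |b0| * |lag0 t| + |F| * |lagHalf t| + |b1| * |lag1 t| := by
        rw [abs_mul, abs_mul, abs_mul]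
    _ < π / 2 := key

private lemma beta_continuous (b0 F b1 : ℝ) :
    Continuous (fun t : ℝ => b0 * lag0 t + F * lagHalf t + b1 * lag1 t) := by
  unfold lag0 lagHalf lag1; fun_prop

/-- Positivity of the real part. -/
private lemma re_pos {b0 b1 : ℝ} (h0 : |b0| ≤ π / 2) (h1 : |b1| ≤ π / 2) :
    0 < (Iint (fun t => b0 * lag0 t + ftilde b0 b1 * lagHalf t + b1 * lag1 t) 1).re := by
  set g : ℝ → ℝ := fun t => b0 * lag0 t + ftilde b0 b1 * lagHalf t + b1 * lag1 t with hg
  have hgc : Continuous g := beta_continuous _ _ _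
  have hcont : Continuous fun s : ℝ => Complex.exp (Complex.I * (g s : ℂ)) := by fun_prop
  have hint : IntervalIntegrable (fun s : ℝ => Complex.exp (Complex.I * (g s : ℂ)))
      MeasureTheory.volume 0 1 := hcont.intervalIntegrable 0 1
  have hre : (Iint g 1).re = ∫ s in (0:ℝ)..1, Real.cos (g s) := by
    have h1 : (Iint g 1).re = ∫ s in (0:ℝ)..1, (Complex.exp (Complex.I * (g s : ℂ))).re := by
      rw [Iint]
      simpa using (Complex.reCLM.intervalIntegral_comp_comm hint).symm
    rw [h1]
    congr 1
    funext s
    simp [Complex.exp_re]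
  rw [hre]
  refine intervalIntegral.intervalIntegral_pos_of_pos_on
    ((Real.continuous_cos.comp hgc).intervalIntegrable 0 1) (fun x hx => ?_) one_pos
  have := beta_abs_lt h0 h1 (ftilde_bound h0 h1) hx
  rw [abs_lt] at this
  exact Real.cos_pos_of_mem_Ioo ⟨by linarith [this.1], this.2⟩

/-- symmetries of the angle defect. On `B = [−π/2, π/2]²` the angle
defect is symmetric and odd: `δ(β₁,β₀) = δ(β₀,β₁)` and `δ(−β₀,−β₁) = −δ(β₀,β₁)`. -/
theorem angle_defect_symmetric_odd
    (β0 β1 : ℝ)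
    (h0 : β0 ∈ Set.Icc (-(π / 2)) (π / 2)) (h1 : β1 ∈ Set.Icc (-(π / 2)) (π / 2)) :
    angleDefect β1 β0 = angleDefect β0 β1 ∧
    angleDefect (-β0) (-β1) = -angleDefect β0 β1 := by
  have h0' : |β0| ≤ π / 2 := abs_le.mpr ⟨by linarith [h0.1], h0.2⟩
  have h1' : |β1| ≤ π / 2 := abs_le.mpr ⟨by linarith [h1.1], h1.2⟩
  constructor
  · -- symmetry
    have hswap : ∀ t : ℝ, β1 * lag0 t + ftilde β1 β0 * lagHalf t + β0 * lag1 t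
        = β0 * lag0 (1 - t) + ftilde β0 β1 * lagHalf (1 - t) + β1 * lag1 (1 - t) := by
      intro t; unfold lag0 lagHalf lag1 ftilde; ring
    have hI : Iint (fun t => β1 * lag0 t + ftilde β1 β0 * lagHalf t + β0 * lag1 t) 1
        = Iint (fun t => β0 * lag0 t + ftilde β0 β1 * lagHalf t + β1 * lag1 t) 1 := by
      rw [Iint, Iint]
      have := intervalIntegral.integral_comp_sub_left
        (fun s : ℝ => Complex.exp (Complex.I *
          ((β0 * lag0 s + ftilde β0 β1 * lagHalf s + β1 * lag1 s : ℝ) : ℂ))) 1 (a := 0) (b := 1)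
      simp only [hswap]
      simpa using this
    rw [angleDefect, angleDefect, hI]
  · -- oddness
    set g : ℝ → ℝ := fun t => β0 * lag0 t + ftilde β0 β1 * lagHalf t + β1 * lag1 t with hg
    have hneg : (fun t => -β0 * lag0 t + ftilde (-β0) (-β1) * lagHalf t + -β1 * lag1 t)
        = fun t => -(g t) := by
      funext t
      show -β0 * lag0 t + ftilde (-β0) (-β1) * lagHalf t + -β1 * lag1 t
          = -(β0 * lag0 t + ftilde β0 β1 * lagHalf t + β1 * lag1 t)
      unfold lag0 lagHalf lag1 ftilde; ring
    have hgc : Continuous g := beta_continuous _ _ _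
    have hint : IntervalIntegrable (fun s : ℝ => Complex.exp (Complex.I * (g s : ℂ)))
        MeasureTheory.volume 0 1 := by
      apply Continuous.intervalIntegrable; fun_prop
    have hpt : ∀ s : ℝ, Complex.exp (Complex.I * ((-(g s) : ℝ) : ℂ))
        = (starRingEnd ℂ) (Complex.exp (Complex.I * (g s : ℂ))) := by
      intro s
      rw [← Complex.exp_conj]
      congr 1
      rw [map_mul, Complex.conj_I, Complex.conj_ofReal]
      push_cast; ring
    have hconj : Iint (fun t => -(g t)) 1 = (starRingEnd ℂ) (Iint g 1) := by
      rw [Iint, Iint]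
      simp_rw [hpt]
      have := Complex.conjCLE.toContinuousLinearMap.intervalIntegral_comp_comm hint
      simpa using this
    have hrepos : 0 < (Iint g 1).re := by rw [hg]; exact re_pos h0' h1'
    have hargne : (Iint g 1).arg ≠ π := by
      intro h
      rw [Complex.arg_eq_pi_iff] at h
      linarith [h.1]
    rw [angleDefect, angleDefect, hneg, hconj, Complex.arg_conj, if_neg hargne]
end
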